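/- arXiv:1702.02657 — 16 statements merged into one kernel-verified Lean document; each statement's English description precedes it below -/
import Mathlib

section
/- Let λ be a measure on X such that R 1 is λ-integrable and λ is forward quasi-invariant under σ, meaning that for every measurable set A with λ(A) = 0 the image σ(A) is a λ-null set (i.e. contained in a measurable set of λ-measure zero). Then the set function A ↦ ∫ R(1_A) dλ (defined on measurable sets, where 1_A is the indicator function of A) is absolutely continuous with respect to λ: for every measurable set A, λ(A) = 0 implies ∫ R(1_A) dλ = 0. -/
open MeasureTheory

/-! A null set `A` has a null image `σ '' A`, enclosed in a measurable null set `B`. Since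
`1_A ≤ 1_B ∘ σ`, positivity and the pull-out property give `R 1_A ≤ 1_B · R 1`, so the
nonnegative function `R 1_A` vanishes off `B`, i.e. `λ`-almost everywhere. -/

section TransferOperator

variable {X : Type*}

theorem monotone_of_add_of_nonneg (R : (X → ℝ) → (X → ℝ))
    (hadd : ∀ f g : X → ℝ, R (f + g) = R f + R g)
    (hpos : ∀ f : X → ℝ, 0 ≤ f → 0 ≤ R f) : Monotone R := by
  intro f g hfg
  have hsplit : R g = R (g - f) + R f := by rw [← hadd, sub_add_cancel]
  have hdiff : 0 ≤ R (g - f) := hpos _ (sub_nonneg.mpr hfg)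
  rw [hsplit]
  exact le_add_of_nonneg_left hdiff

theorem indicator_one_le_indicator_one_comp {σ : X → X} {A B : Set X} (hAB : σ '' A ⊆ B) :
    A.indicator (fun _ => (1 : ℝ)) ≤ B.indicator (fun _ => 1) ∘ σ := by
  intro x
  rw [Function.comp_apply, ← Set.indicator_comp_right]
  exact Set.indicator_le_indicator_of_subset (Set.image_subset_iff.mp hAB)
    (fun _ => zero_le_one) x

theorem apply_indicator_one_le_indicator_mul [MeasurableSpace X] {σ : X → X}
    (R : (X → ℝ) → (X → ℝ))
    (hadd : ∀ f g : X → ℝ, R (f + g) = R f + R g)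
    (hpos : ∀ f : X → ℝ, 0 ≤ f → 0 ≤ R f)
    (hpull : ∀ f g : X → ℝ, Measurable f → Measurable g →
      R ((f ∘ σ) * g) = f * R g)
    {A B : Set X} (hB : MeasurableSet B) (hAB : σ '' A ⊆ B) :
    R (A.indicator fun _ => 1) ≤ B.indicator (fun _ => 1) * R 1 := by
  rw [← hpull _ _ (measurable_const.indicator hB) measurable_one, mul_one]
  exact monotone_of_add_of_nonneg R hadd hpos (indicator_one_le_indicator_one_comp hAB)

theorem apply_indicator_one_ae_eq_zero [MeasurableSpace X] {σ : X → X}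
    (R : (X → ℝ) → (X → ℝ))
    (hadd : ∀ f g : X → ℝ, R (f + g) = R f + R g)
    (hpos : ∀ f : X → ℝ, 0 ≤ f → 0 ≤ R f)
    (hpull : ∀ f g : X → ℝ, Measurable f → Measurable g →
      R ((f ∘ σ) * g) = f * R g)
    {lam : Measure X} {A : Set X} (himage : lam (σ '' A) = 0) :
    R (A.indicator fun _ => 1) =ᵐ[lam] 0 := by
  set B := toMeasurable lam (σ '' A)
  have hB : lam B = 0 := by rwa [measure_toMeasurable]
  have hle : R (A.indicator fun _ => 1) ≤ B.indicator (fun _ => 1) * R 1 :=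
    apply_indicator_one_le_indicator_mul R hadd hpos hpull
      (measurableSet_toMeasurable lam _) (subset_toMeasurable lam _)
  have hnonneg : 0 ≤ R (A.indicator fun _ => 1) :=
    hpos _ (Set.indicator_nonneg fun _ _ => zero_le_one)
  filter_upwards [measure_eq_zero_iff_ae_notMem.mp hB] with x hx
  refine le_antisymm ?_ (hnonneg x)
  simpa [Set.indicator_of_notMem hx] using hle x

end TransferOperator

theorem stmt_0_general {X : Type*} [MeasurableSpace X] (σ : X → X)
    (R : (X → ℝ) → (X → ℝ))
    (hadd : ∀ f g : X → ℝ, R (f + g) = R f + R g)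
    (hpos : ∀ f : X → ℝ, 0 ≤ f → 0 ≤ R f)
    (hpull : ∀ f g : X → ℝ, Measurable f → Measurable g →
      R ((f ∘ σ) * g) = f * R g)
    (lam : Measure X)
    (hfwd : ∀ A : Set X, MeasurableSet A → lam A = 0 → lam (σ '' A) = 0) :
    ∀ A : Set X, MeasurableSet A → lam A = 0 →
      ∫ x, R (A.indicator fun _ => (1 : ℝ)) x ∂lam = 0 := by
  intro A hA hA0
  exact (integral_congr_ae
    (apply_indicator_one_ae_eq_zero R hadd hpos hpull (hfwd A hA hA0))).trans (integral_zero _ _)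

/-- If `R 1` is `λ`-integrable and `σ` is forward quasi-invariant for `λ`
(null sets have null images), then `A ↦ ∫ R(1_A) dλ` is absolutely continuous
with respect to `λ`. -/
theorem stmt_0 {X : Type*} [MeasurableSpace X] (σ : X → X)
    (hσ : Measurable σ) (hσsurj : Function.Surjective σ)
    (R : (X → ℝ) → (X → ℝ))
    (hadd : ∀ f g : X → ℝ, R (f + g) = R f + R g)
    (hsmul : ∀ (c : ℝ) (f : X → ℝ), R (c • f) = c • R f)
    (hmeas : ∀ f : X → ℝ, Measurable f → Measurable (R f))
    (hpos : ∀ f : X → ℝ, 0 ≤ f → 0 ≤ R f)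
    (hpull : ∀ f g : X → ℝ, Measurable f → Measurable g →
      R ((f ∘ σ) * g) = f * R g)
    (lam : Measure X)
    (hint : Integrable (R 1) lam)
    (hfwd : ∀ A : Set X, MeasurableSet A → lam A = 0 → lam (σ '' A) = 0) :
    ∀ A : Set X, MeasurableSet A → lam A = 0 →
      ∫ x, R (A.indicator fun _ => (1 : ℝ)) x ∂lam = 0 :=
  stmt_0_general σ R hadd hpos hpull lam hfwd
end

section
/- Let λ be a measure on X, φ : X → ℝ a nonnegative measurable function, and λ₁ = λ.withDensity φ. Suppose ν is the action of R on λ and ν₁ is the action of R on λ₁ (i.e. ∫ f dν = ∫ R f dλ and ∫ f dν₁ = ∫ R f dλ₁ for all nonnegative measurable f). Then ν₁ = ν.withDensity (φ ∘ σ); in particular ν₁ is absolutely continuous with respect to ν with Radon–Nikodym derivative φ ∘ σ, so if λ₁ ≪ λ then λ₁R ≪ λR. -/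
/-! By the pull-out property, `∫ f · (φ ∘ σ) d(λR) = ∫ R((φ ∘ σ) f) dλ = ∫ φ · R f dλ = ∫ R f dλ₁`,
so `(λR).withDensity (φ ∘ σ)` is an action of `R` on `λ₁`; and an action is unique, being
determined by its integrals of indicator functions. -/

open MeasureTheory

namespace MeasureTheory

variable {X : Type*} [MeasurableSpace X]

/-- `ν = λR` in the paper's notation. -/
def IsTransferAction (R : (X → ℝ) → (X → ℝ)) (lam ν : Measure X) : Prop :=
  ∀ f : X → ℝ, Measurable f → 0 ≤ f →
    ∫⁻ x, ENNReal.ofReal (f x) ∂ν = ∫⁻ x, ENNReal.ofReal (R f x) ∂lam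

theorem Measure.ext_of_lintegral_ofReal {μ ν : Measure X}
    (h : ∀ f : X → ℝ, Measurable f → 0 ≤ f →
      ∫⁻ x, ENNReal.ofReal (f x) ∂μ = ∫⁻ x, ENNReal.ofReal (f x) ∂ν) :
    μ = ν := by
  ext s hs
  have hind := h (s.indicator 1) (measurable_const.indicator hs)
    (Set.indicator_nonneg fun _ _ => zero_le_one)
  have hofReal : (fun x => ENNReal.ofReal (s.indicator 1 x)) = s.indicator 1 := by
    funext x
    by_cases hx : x ∈ s <;> simp [hx]
  rwa [hofReal, lintegral_indicator_one hs, lintegral_indicator_one hs] at hind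

namespace IsTransferAction

variable {R : (X → ℝ) → (X → ℝ)} {lam ν : Measure X}

theorem unique {ν' : Measure X} (hν : IsTransferAction R lam ν)
    (hν' : IsTransferAction R lam ν') : ν = ν' :=
  Measure.ext_of_lintegral_ofReal fun f hf hf0 => (hν f hf hf0).trans (hν' f hf hf0).symm

theorem withDensity_comp {σ : X → X} (hσ : Measurable σ)
    (hpull : ∀ f g : X → ℝ, Measurable f → Measurable g → R ((f ∘ σ) * g) = f * R g)
    {φ : X → ℝ} (hφ : Measurable φ) (hφ0 : 0 ≤ φ) (hν : IsTransferAction R lam ν) :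
    IsTransferAction R (lam.withDensity fun x => ENNReal.ofReal (φ x))
      (ν.withDensity fun x => ENNReal.ofReal (φ (σ x))) := by
  intro f hf hf0
  have hφf0 : 0 ≤ (φ ∘ σ) * f := fun x => mul_nonneg (hφ0 (σ x)) (hf0 x)
  calc ∫⁻ x, ENNReal.ofReal (f x) ∂ν.withDensity (fun x => ENNReal.ofReal (φ (σ x)))
      = ∫⁻ x, ENNReal.ofReal (((φ ∘ σ) * f) x) ∂ν := by
        rw [lintegral_withDensity_eq_lintegral_mul_non_measurable _
          (f := fun x => ENNReal.ofReal (φ (σ x))) (hφ.comp hσ).ennreal_ofReal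
          (.of_forall fun _ => ENNReal.ofReal_lt_top)]
        simp only [Pi.mul_apply, Function.comp_apply, ENNReal.ofReal_mul (hφ0 _)]
    _ = ∫⁻ x, ENNReal.ofReal ((φ * R f) x) ∂lam := by
        rw [hν _ ((hφ.comp hσ).mul hf) hφf0, hpull φ f hφ hf]
    _ = ∫⁻ x, ENNReal.ofReal (R f x) ∂lam.withDensity (fun x => ENNReal.ofReal (φ x)) := by
        rw [lintegral_withDensity_eq_lintegral_mul_non_measurable _
          hφ.ennreal_ofReal (.of_forall fun _ => ENNReal.ofReal_lt_top)]
        simp only [Pi.mul_apply, ENNReal.ofReal_mul (hφ0 _)]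

end IsTransferAction

end MeasureTheory

theorem stmt_2_general {X : Type*} [MeasurableSpace X] (σ : X → X)
    (hσ : Measurable σ)
    (R : (X → ℝ) → (X → ℝ))
    (hpull : ∀ f g : X → ℝ, Measurable f → Measurable g →
      R ((f ∘ σ) * g) = f * R g)
    (lam : Measure X)
    (φ : X → ℝ) (hφ : Measurable φ) (hφ0 : 0 ≤ φ)
    (lam₁ : Measure X)
    (hlam₁ : lam₁ = lam.withDensity fun x => ENNReal.ofReal (φ x))
    (ν ν₁ : Measure X)
    (hν : ∀ f : X → ℝ, Measurable f → 0 ≤ f →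
      ∫⁻ x, ENNReal.ofReal (f x) ∂ν = ∫⁻ x, ENNReal.ofReal (R f x) ∂lam)
    (hν₁ : ∀ f : X → ℝ, Measurable f → 0 ≤ f →
      ∫⁻ x, ENNReal.ofReal (f x) ∂ν₁ = ∫⁻ x, ENNReal.ofReal (R f x) ∂lam₁) :
    ν₁ = ν.withDensity (fun x => ENNReal.ofReal (φ (σ x))) ∧ ν₁ ≪ ν := by
  subst hlam₁
  have hν₁_eq : ν₁ = ν.withDensity fun x => ENNReal.ofReal (φ (σ x)) :=
    IsTransferAction.unique hν₁
      (IsTransferAction.withDensity_comp hσ hpull hφ hφ0 hν)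
  exact ⟨hν₁_eq, hν₁_eq ▸ withDensity_absolutelyContinuous ν _⟩

/-- If `λ₁ = λ.withDensity φ` and `ν, ν₁` are the actions of the transfer operator `R`
on `λ, λ₁`, then `ν₁ = ν.withDensity (φ ∘ σ)`; in particular `ν₁ ≪ ν`. -/
theorem stmt_2 {X : Type*} [MeasurableSpace X] (σ : X → X)
    (hσ : Measurable σ) (hσsurj : Function.Surjective σ)
    (R : (X → ℝ) → (X → ℝ))
    (hadd : ∀ f g : X → ℝ, R (f + g) = R f + R g)
    (hsmul : ∀ (c : ℝ) (f : X → ℝ), R (c • f) = c • R f)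
    (hmeas : ∀ f : X → ℝ, Measurable f → Measurable (R f))
    (hpos : ∀ f : X → ℝ, 0 ≤ f → 0 ≤ R f)
    (hpull : ∀ f g : X → ℝ, Measurable f → Measurable g →
      R ((f ∘ σ) * g) = f * R g)
    (lam : Measure X)
    (φ : X → ℝ) (hφ : Measurable φ) (hφ0 : 0 ≤ φ)
    (lam₁ : Measure X)
    (hlam₁ : lam₁ = lam.withDensity fun x => ENNReal.ofReal (φ x))
    (ν ν₁ : Measure X)
    (hν : ∀ f : X → ℝ, Measurable f → 0 ≤ f →
      ∫⁻ x, ENNReal.ofReal (f x) ∂ν = ∫⁻ x, ENNReal.ofReal (R f x) ∂lam)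
    (hν₁ : ∀ f : X → ℝ, Measurable f → 0 ≤ f →
      ∫⁻ x, ENNReal.ofReal (f x) ∂ν₁ = ∫⁻ x, ENNReal.ofReal (R f x) ∂lam₁) :
    ν₁ = ν.withDensity (fun x => ENNReal.ofReal (φ (σ x))) ∧ ν₁ ≪ ν :=
  stmt_2_general σ hσ R hpull lam φ hφ hφ0 lam₁ hlam₁ ν ν₁ hν hν₁
end

section
/- Let λ be a measure on X whose action λR satisfies λR = λ.withDensity W for a nonnegative measurable function W (so λR ≪ λ with Radon–Nikodym derivative W). Let φ : X → ℝ be measurable with φ(x) > 0 for every x, and put λ₁ = λ.withDensity φ. Then the action λ₁R of R on λ₁ satisfies λ₁R = λ₁.withDensity ((φ ∘ σ) · W · φ⁻¹); that is, λ₁R ≪ λ₁ and the Radon–Nikodym derivative of λ₁R with respect to λ₁ is cohomologous to W: W₁(x) = φ(σ(x)) · W(x) · φ(x)⁻¹. -/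
open MeasureTheory

/-- If `λR = λ.withDensity W` and `λ₁ = λ.withDensity φ` with `φ > 0`, then
`λ₁R = λ₁.withDensity ((φ ∘ σ) · W · φ⁻¹)`; in particular `λ₁R ≪ λ₁` with
Radon–Nikodym derivative cohomologous to `W`. -/
theorem stmt_3 {X : Type*} [MeasurableSpace X] (σ : X → X)
    (hσ : Measurable σ) (hσsurj : Function.Surjective σ)
    (R : (X → ℝ) → (X → ℝ))
    (hadd : ∀ f g : X → ℝ, R (f + g) = R f + R g)
    (hsmul : ∀ (c : ℝ) (f : X → ℝ), R (c • f) = c • R f)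
    (hmeas : ∀ f : X → ℝ, Measurable f → Measurable (R f))
    (hpos : ∀ f : X → ℝ, 0 ≤ f → 0 ≤ R f)
    (hpull : ∀ f g : X → ℝ, Measurable f → Measurable g →
      R ((f ∘ σ) * g) = f * R g)
    (lam : Measure X)
    (W : X → ℝ) (hW : Measurable W) (hW0 : 0 ≤ W)
    (ν : Measure X)
    (hν : ∀ f : X → ℝ, Measurable f → 0 ≤ f →
      ∫⁻ x, ENNReal.ofReal (f x) ∂ν = ∫⁻ x, ENNReal.ofReal (R f x) ∂lam)
    (hνW : ν = lam.withDensity fun x => ENNReal.ofReal (W x))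
    (φ : X → ℝ) (hφ : Measurable φ) (hφpos : ∀ x, 0 < φ x)
    (lam₁ : Measure X)
    (hlam₁ : lam₁ = lam.withDensity fun x => ENNReal.ofReal (φ x))
    (ν₁ : Measure X)
    (hν₁ : ∀ f : X → ℝ, Measurable f → 0 ≤ f →
      ∫⁻ x, ENNReal.ofReal (f x) ∂ν₁ = ∫⁻ x, ENNReal.ofReal (R f x) ∂lam₁) :
    ν₁ = lam₁.withDensity (fun x => ENNReal.ofReal (φ (σ x) * W x * (φ x)⁻¹)) ∧
      ν₁ ≪ lam₁ := by

  have hφσ : Measurable (φ ∘ σ) := hφ.comp hσ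
  suffices hmain : ν₁ = lam₁.withDensity
      (fun x => ENNReal.ofReal (φ (σ x) * W x * (φ x)⁻¹)) by
    exact ⟨hmain, hmain ▸ withDensity_absolutelyContinuous _ _⟩
  ext s hs
  set f : X → ℝ := s.indicator 1 with hf
  have hfm : Measurable f := measurable_one.indicator hs
  have hf0 : (0 : X → ℝ) ≤ f := fun x => Set.indicator_nonneg (fun _ _ => zero_le_one) x
  have hRfm : Measurable (R f) := hmeas f hfm
  have h1 : ν₁ s = ∫⁻ x, ENNReal.ofReal (f x) ∂ν₁ := by
    rw [← lintegral_indicator_one hs]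
    refine lintegral_congr fun x => ?_
    by_cases hx : x ∈ s <;> simp [hf, Set.indicator_apply, hx]
  have hpf : R ((φ ∘ σ) * f) = φ * R f := hpull φ f hφ hfm
  have hgm : Measurable ((φ ∘ σ) * f) := hφσ.mul hfm
  have hg0 : (0 : X → ℝ) ≤ (φ ∘ σ) * f := fun x =>
    mul_nonneg (hφpos (σ x)).le (hf0 x)
  calc ν₁ s = ∫⁻ x, ENNReal.ofReal (f x) ∂ν₁ := h1
    _ = ∫⁻ x, ENNReal.ofReal (R f x) ∂lam₁ := hν₁ f hfm hf0
    _ = ∫⁻ x, ENNReal.ofReal (φ x) * ENNReal.ofReal (R f x) ∂lam := by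
        rw [hlam₁, lintegral_withDensity_eq_lintegral_mul _ hφ.ennreal_ofReal
          hRfm.ennreal_ofReal]
        rfl
    _ = ∫⁻ x, ENNReal.ofReal (R ((φ ∘ σ) * f) x) ∂lam := by
        refine lintegral_congr fun x => ?_
        rw [hpf, Pi.mul_apply, ENNReal.ofReal_mul (hφpos x).le]
    _ = ∫⁻ x, ENNReal.ofReal (((φ ∘ σ) * f) x) ∂ν := (hν _ hgm hg0).symm
    _ = ∫⁻ x, ENNReal.ofReal (W x) * ENNReal.ofReal (((φ ∘ σ) * f) x) ∂lam := by
        rw [hνW, lintegral_withDensity_eq_lintegral_mul _ hW.ennreal_ofReal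
          (hgm.ennreal_ofReal)]
        rfl
    _ = ∫⁻ x, ENNReal.ofReal (φ x) *
          s.indicator (fun x => ENNReal.ofReal (φ (σ x) * W x * (φ x)⁻¹)) x ∂lam := by
        refine lintegral_congr fun x => ?_
        by_cases hx : x ∈ s
        · have hφx := hφpos x
          simp only [hf, Set.indicator_of_mem hx, Pi.mul_apply, Function.comp_apply,
            Pi.one_apply, mul_one]
          rw [← ENNReal.ofReal_mul (hW0 x), ← ENNReal.ofReal_mul hφx.le]
          congr 1
          field_simp
        · simp [hf, Set.indicator_of_notMem hx]
    _ = lam₁.withDensity (fun x => ENNReal.ofReal (φ (σ x) * W x * (φ x)⁻¹)) s := by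
        rw [withDensity_apply _ hs, hlam₁,
          setLIntegral_withDensity_eq_setLIntegral_mul _ hφ.ennreal_ofReal
            (Measurable.ennreal_ofReal (by measurability)) hs,
          ← lintegral_indicator hs]
        refine lintegral_congr fun x => ?_
        by_cases hx : x ∈ s <;> simp [Set.indicator_apply, hx]
end

section
/- Let λ be a σ-finite measure on X whose action satisfies λR = λ.withDensity W for a nonnegative measurable W. Then the following are equivalent: (i) W is a σ-coboundary, i.e. there exists a nonnegative measurable q : X → ℝ with q > 0 λ-almost everywhere and W · (q ∘ σ) = q λ-almost everywhere; (ii) there exists a σ-finite measure λ₁ equivalent to λ (λ₁ ≪ λ and λ ≪ λ₁) which is R-invariant, i.e. ∫ R f dλ₁ = ∫ f dλ₁ for every nonnegative measurable f : X → ℝ. -/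
/-!
By the pull-out property, transporting the measure `q λ` through `R` gives `(q λ)R = (W · q ∘ σ) λ`.
Every measure equivalent to `λ` is of the form `q λ` with `q > 0` a.e. (Radon–Nikodym), and `q λ` is
`R`-invariant exactly when the two densities `W · q ∘ σ` and `q` agree a.e., which is the coboundary
equation.
-/

open MeasureTheory

namespace MeasureTheory

variable {X : Type*} [MeasurableSpace X]

theorem Measure.exists_eq_withDensity_ofReal_of_absolutelyContinuous {μ ν : Measure X}
    [SigmaFinite μ] [SigmaFinite ν] (hμν : μ ≪ ν) (hνμ : ν ≪ μ) :
    ∃ q : X → ℝ, Measurable q ∧ 0 ≤ q ∧ (∀ᵐ x ∂ν, 0 < q x) ∧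
      μ = ν.withDensity fun x => ENNReal.ofReal (q x) := by
  refine ⟨fun x => (μ.rnDeriv ν x).toReal, (μ.measurable_rnDeriv ν).ennreal_toReal,
    fun _ => ENNReal.toReal_nonneg, ?_, ?_⟩
  · filter_upwards [Measure.rnDeriv_pos' hνμ, μ.rnDeriv_lt_top ν] with x hpos hfin
    exact ENNReal.toReal_pos hpos.ne' hfin.ne
  · conv_lhs => rw [← Measure.withDensity_rnDeriv_eq μ ν hμν]
    refine withDensity_congr_ae ?_
    filter_upwards [μ.rnDeriv_lt_top ν] with x hfin
    exact (ENNReal.ofReal_toReal hfin.ne).symm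

theorem lintegral_ofReal_apply_withDensity {σ : X → X} (hσ : Measurable σ)
    {R : (X → ℝ) → (X → ℝ)} (hmeas : ∀ f : X → ℝ, Measurable f → Measurable (R f))
    (hpull : ∀ f g : X → ℝ, Measurable f → Measurable g → R ((f ∘ σ) * g) = f * R g)
    {lam : Measure X} {W : X → ℝ} (hW : Measurable W)
    (hRW : ∀ f : X → ℝ, Measurable f → 0 ≤ f →
      ∫⁻ x, ENNReal.ofReal (R f x) ∂lam = ∫⁻ x, ENNReal.ofReal (f x * W x) ∂lam)
    {q : X → ℝ} (hq : Measurable q) (hq0 : 0 ≤ q) {f : X → ℝ} (hf : Measurable f) (hf0 : 0 ≤ f) :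
    ∫⁻ x, ENNReal.ofReal (R f x) ∂lam.withDensity (fun x => ENNReal.ofReal (q x)) =
      ∫⁻ x, ENNReal.ofReal (f x) ∂lam.withDensity (fun x => ENNReal.ofReal (W x * q (σ x))) := by
  rw [lintegral_withDensity_eq_lintegral_mul _ hq.ennreal_ofReal (hmeas f hf).ennreal_ofReal,
    lintegral_withDensity_eq_lintegral_mul _ (by fun_prop) hf.ennreal_ofReal]
  have hRW' := hRW _ ((hq.comp hσ).mul hf) fun x => mul_nonneg (hq0 _) (hf0 x)
  rw [hpull q f hq hf] at hRW'
  calc ∫⁻ x, ENNReal.ofReal (q x) * ENNReal.ofReal (R f x) ∂lam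
      = ∫⁻ x, ENNReal.ofReal ((q * R f) x) ∂lam := by
        simp only [Pi.mul_apply, ENNReal.ofReal_mul (hq0 _)]
    _ = ∫⁻ x, ENNReal.ofReal (W x * q (σ x)) * ENNReal.ofReal (f x) ∂lam := by
        refine hRW'.trans (lintegral_congr fun x => ?_)
        rw [← ENNReal.ofReal_mul' (hf0 x), Pi.mul_apply, Function.comp_apply]
        ring_nf

end MeasureTheory

theorem stmt_4_general {X : Type*} [MeasurableSpace X] (σ : X → X)
    (hσ : Measurable σ)
    (R : (X → ℝ) → (X → ℝ))
    (hmeas : ∀ f : X → ℝ, Measurable f → Measurable (R f))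
    (hpull : ∀ f g : X → ℝ, Measurable f → Measurable g →
      R ((f ∘ σ) * g) = f * R g)
    (lam : Measure X) [SigmaFinite lam]
    (W : X → ℝ) (hW : Measurable W) (hW0 : 0 ≤ W)
    (hRW : ∀ f : X → ℝ, Measurable f → 0 ≤ f →
      ∫⁻ x, ENNReal.ofReal (R f x) ∂lam = ∫⁻ x, ENNReal.ofReal (f x * W x) ∂lam) :
    (∃ q : X → ℝ, Measurable q ∧ 0 ≤ q ∧ (∀ᵐ x ∂lam, 0 < q x) ∧
      (fun x => W x * q (σ x)) =ᵐ[lam] q) ↔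
    (∃ lam₁ : Measure X, SigmaFinite lam₁ ∧ lam₁ ≪ lam ∧ lam ≪ lam₁ ∧
      ∀ f : X → ℝ, Measurable f → 0 ≤ f →
        ∫⁻ x, ENNReal.ofReal (R f x) ∂lam₁ = ∫⁻ x, ENNReal.ofReal (f x) ∂lam₁) := by
  have transfer (q f : X → ℝ) :=
    lintegral_ofReal_apply_withDensity (q := q) (f := f) hσ hmeas hpull hW hRW
  constructor
  · rintro ⟨q, hq, hq0, hqpos, hcob⟩
    refine ⟨lam.withDensity fun x => ENNReal.ofReal (q x), inferInstance,
      withDensity_absolutelyContinuous _ _, withDensity_absolutelyContinuous' (by fun_prop) ?_,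
      fun f hf hf0 => ?_⟩
    · filter_upwards [hqpos] with x hx
      exact (ENNReal.ofReal_pos.mpr hx).ne'
    · rw [transfer q f hq hq0 hf hf0]
      congr 1
      exact withDensity_congr_ae (hcob.fun_comp ENNReal.ofReal)
  · rintro ⟨lam₁, _, hlam₁, hlam, hinv⟩
    obtain ⟨q, hq, hq0, hqpos, rfl⟩ :=
      Measure.exists_eq_withDensity_ofReal_of_absolutelyContinuous hlam₁ hlam
    refine ⟨q, hq, hq0, hqpos, ?_⟩
    have hdens : lam.withDensity (fun x => ENNReal.ofReal (W x * q (σ x))) =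
        lam.withDensity fun x => ENNReal.ofReal (q x) :=
      Measure.ext_of_lintegral_ofReal fun f hf hf0 =>
        (transfer q f hq hq0 hf hf0).symm.trans (hinv f hf hf0)
    rw [withDensity_eq_iff_of_sigmaFinite (by fun_prop) (by fun_prop)] at hdens
    filter_upwards [hdens] with x hx
    exact (ENNReal.ofReal_eq_ofReal_iff (mul_nonneg (hW0 x) (hq0 _)) (hq0 x)).mp hx

/-- `W = d(λR)/dλ` is a `σ`-coboundary iff there is a `σ`-finite measure `λ₁`
equivalent to `λ` which is `R`-invariant. -/
theorem stmt_4 {X : Type*} [MeasurableSpace X] (σ : X → X)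
    (hσ : Measurable σ) (hσsurj : Function.Surjective σ)
    (R : (X → ℝ) → (X → ℝ))
    (hadd : ∀ f g : X → ℝ, R (f + g) = R f + R g)
    (hsmul : ∀ (c : ℝ) (f : X → ℝ), R (c • f) = c • R f)
    (hmeas : ∀ f : X → ℝ, Measurable f → Measurable (R f))
    (hpos : ∀ f : X → ℝ, 0 ≤ f → 0 ≤ R f)
    (hpull : ∀ f g : X → ℝ, Measurable f → Measurable g →
      R ((f ∘ σ) * g) = f * R g)
    (lam : Measure X) [SigmaFinite lam]
    (W : X → ℝ) (hW : Measurable W) (hW0 : 0 ≤ W)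
    (hRW : ∀ f : X → ℝ, Measurable f → 0 ≤ f →
      ∫⁻ x, ENNReal.ofReal (R f x) ∂lam = ∫⁻ x, ENNReal.ofReal (f x * W x) ∂lam) :
    (∃ q : X → ℝ, Measurable q ∧ 0 ≤ q ∧ (∀ᵐ x ∂lam, 0 < q x) ∧
      (fun x => W x * q (σ x)) =ᵐ[lam] q) ↔
    (∃ lam₁ : Measure X, SigmaFinite lam₁ ∧ lam₁ ≪ lam ∧ lam ≪ lam₁ ∧
      ∀ f : X → ℝ, Measurable f → 0 ≤ f →
        ∫⁻ x, ENNReal.ofReal (R f x) ∂lam₁ = ∫⁻ x, ENNReal.ofReal (f x) ∂lam₁) :=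
  stmt_4_general σ hσ R hmeas hpull lam W hW hW0 hRW
end

section
/- Let λ be a σ-finite measure on X which is R-invariant, i.e. ∫ R f dλ = ∫ f dλ for every nonnegative measurable f : X → ℝ. Let φ : X → ℝ be a nonnegative measurable function and μ = λ.withDensity φ. Then μ is R-invariant (∫ R f dμ = ∫ f dμ for every nonnegative measurable f) if and only if φ ∘ σ = φ λ-almost everywhere. -/
/-!
The pull-out property and the `R`-invariance of `λ` give, for every nonnegative
measurable `f`, `∫ φ · R f dλ = ∫ R ((φ ∘ σ) · f) dλ = ∫ (φ ∘ σ) · f dλ`, while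
`∫ R f dμ = ∫ φ · R f dλ` and `∫ f dμ = ∫ φ · f dλ`. So `μ` is `R`-invariant iff the
densities `φ ∘ σ` and `φ` have the same integral against every nonnegative measurable `f`
with respect to `λ`; taking indicators of measurable sets and using `σ`-finiteness, this
holds iff `φ ∘ σ = φ` `λ`-a.e.
-/

open MeasureTheory

namespace TransferOperator

variable {X : Type*} [MeasurableSpace X]

def IsInvariantMeasure (R : (X → ℝ) → X → ℝ) (μ : Measure X) : Prop :=
  ∀ f : X → ℝ, Measurable f → 0 ≤ f →
    ∫⁻ x, ENNReal.ofReal (R f x) ∂μ = ∫⁻ x, ENNReal.ofReal (f x) ∂μ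

lemma lintegral_ofReal_withDensity_ofReal (lam : Measure X) {φ : X → ℝ} (hφ : Measurable φ)
    (hφ0 : 0 ≤ φ) (g : X → ℝ) :
    ∫⁻ x, ENNReal.ofReal (g x) ∂lam.withDensity (fun x => ENNReal.ofReal (φ x)) =
      ∫⁻ x, ENNReal.ofReal (φ x * g x) ∂lam := by
  rw [lintegral_withDensity_eq_lintegral_mul_non_measurable lam hφ.ennreal_ofReal
    (.of_forall fun _ => ENNReal.ofReal_lt_top)]
  simp only [Pi.mul_apply, ENNReal.ofReal_mul (hφ0 _)]

lemma lintegral_ofReal_mul_eq_lintegral_ofReal_comp_mul {σ : X → X} (hσ : Measurable σ)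
    {R : (X → ℝ) → X → ℝ}
    (hpull : ∀ f g : X → ℝ, Measurable f → Measurable g → R ((f ∘ σ) * g) = f * R g)
    {lam : Measure X} (hlam : IsInvariantMeasure R lam) {φ f : X → ℝ} (hφ : Measurable φ)
    (hφ0 : 0 ≤ φ) (hf : Measurable f) (hf0 : 0 ≤ f) :
    ∫⁻ x, ENNReal.ofReal (φ x * R f x) ∂lam =
      ∫⁻ x, ENNReal.ofReal (φ (σ x) * f x) ∂lam := by
  have h := hlam ((φ ∘ σ) * f) ((hφ.comp hσ).mul hf) fun x => mul_nonneg (hφ0 _) (hf0 x)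
  rwa [hpull φ f hφ hf] at h

lemma isInvariantMeasure_withDensity_iff {σ : X → X} (hσ : Measurable σ)
    {R : (X → ℝ) → X → ℝ}
    (hpull : ∀ f g : X → ℝ, Measurable f → Measurable g → R ((f ∘ σ) * g) = f * R g)
    {lam : Measure X} (hlam : IsInvariantMeasure R lam) {φ : X → ℝ} (hφ : Measurable φ)
    (hφ0 : 0 ≤ φ) :
    IsInvariantMeasure R (lam.withDensity fun x => ENNReal.ofReal (φ x)) ↔
      ∀ f : X → ℝ, Measurable f → 0 ≤ f →
        ∫⁻ x, ENNReal.ofReal (φ (σ x) * f x) ∂lam =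
          ∫⁻ x, ENNReal.ofReal (φ x * f x) ∂lam := by
  refine forall₃_congr fun f hf hf0 => ?_
  rw [lintegral_ofReal_withDensity_ofReal lam hφ hφ0,
    lintegral_ofReal_withDensity_ofReal lam hφ hφ0,
    lintegral_ofReal_mul_eq_lintegral_ofReal_comp_mul hσ hpull hlam hφ hφ0 hf hf0]

lemma lintegral_ofReal_mul_indicator_one (lam : Measure X) (ψ : X → ℝ) {s : Set X}
    (hs : MeasurableSet s) :
    ∫⁻ x, ENNReal.ofReal (ψ x * s.indicator 1 x) ∂lam =
      ∫⁻ x in s, ENNReal.ofReal (ψ x) ∂lam := by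
  rw [← lintegral_indicator hs]
  refine lintegral_congr fun x => ?_
  by_cases hx : x ∈ s <;> simp [hx]

lemma ae_eq_of_forall_lintegral_ofReal_mul_eq {lam : Measure X} [SigmaFinite lam]
    {φ ψ : X → ℝ} (hφ : Measurable φ) (hψ : Measurable ψ) (hφ0 : 0 ≤ φ) (hψ0 : 0 ≤ ψ)
    (h : ∀ f : X → ℝ, Measurable f → 0 ≤ f →
      ∫⁻ x, ENNReal.ofReal (φ x * f x) ∂lam =
        ∫⁻ x, ENNReal.ofReal (ψ x * f x) ∂lam) :
    φ =ᵐ[lam] ψ := by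
  have hset : ∀ s, MeasurableSet s → lam s < ⊤ →
      ∫⁻ x in s, ENNReal.ofReal (φ x) ∂lam =
        ∫⁻ x in s, ENNReal.ofReal (ψ x) ∂lam := by
    intro s hs _
    have hf0 : 0 ≤ s.indicator (1 : X → ℝ) := Set.indicator_nonneg fun _ _ => zero_le_one
    simpa only [lintegral_ofReal_mul_indicator_one lam _ hs] using
      h _ (measurable_one.indicator hs) hf0
  filter_upwards [ae_eq_of_forall_setLIntegral_eq_of_sigmaFinite hφ.ennreal_ofReal
    hψ.ennreal_ofReal hset] with x hx
  exact (ENNReal.ofReal_eq_ofReal_iff (hφ0 x) (hψ0 x)).mp hx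

end TransferOperator

theorem stmt_5_general {X : Type*} [MeasurableSpace X] (σ : X → X)
    (hσ : Measurable σ)
    (R : (X → ℝ) → (X → ℝ))
    (hpull : ∀ f g : X → ℝ, Measurable f → Measurable g →
      R ((f ∘ σ) * g) = f * R g)
    (lam : Measure X) [SigmaFinite lam]
    (hRinv : ∀ f : X → ℝ, Measurable f → 0 ≤ f →
      ∫⁻ x, ENNReal.ofReal (R f x) ∂lam = ∫⁻ x, ENNReal.ofReal (f x) ∂lam)
    (φ : X → ℝ) (hφ : Measurable φ) (hφ0 : 0 ≤ φ)
    (μ : Measure X)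
    (hμ : μ = lam.withDensity fun x => ENNReal.ofReal (φ x)) :
    (∀ f : X → ℝ, Measurable f → 0 ≤ f →
      ∫⁻ x, ENNReal.ofReal (R f x) ∂μ = ∫⁻ x, ENNReal.ofReal (f x) ∂μ) ↔
    (fun x => φ (σ x)) =ᵐ[lam] φ := by
  subst hμ
  refine (TransferOperator.isInvariantMeasure_withDensity_iff hσ hpull hRinv hφ hφ0).trans
    ⟨fun h => ?_, fun h => ?_⟩
  · exact TransferOperator.ae_eq_of_forall_lintegral_ofReal_mul_eq (hφ.comp hσ) hφ
      (fun x => hφ0 (σ x)) hφ0 h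
  · intro f _ _
    refine lintegral_congr_ae ?_
    filter_upwards [h] with x hx
    rw [hx]

/-- If `λ` is `R`-invariant then `μ = λ.withDensity φ` is `R`-invariant iff
`φ ∘ σ = φ` `λ`-a.e. -/
theorem stmt_5 {X : Type*} [MeasurableSpace X] (σ : X → X)
    (hσ : Measurable σ) (hσsurj : Function.Surjective σ)
    (R : (X → ℝ) → (X → ℝ))
    (hadd : ∀ f g : X → ℝ, R (f + g) = R f + R g)
    (hsmul : ∀ (c : ℝ) (f : X → ℝ), R (c • f) = c • R f)
    (hmeas : ∀ f : X → ℝ, Measurable f → Measurable (R f))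
    (hpos : ∀ f : X → ℝ, 0 ≤ f → 0 ≤ R f)
    (hpull : ∀ f g : X → ℝ, Measurable f → Measurable g →
      R ((f ∘ σ) * g) = f * R g)
    (lam : Measure X) [SigmaFinite lam]
    (hRinv : ∀ f : X → ℝ, Measurable f → 0 ≤ f →
      ∫⁻ x, ENNReal.ofReal (R f x) ∂lam = ∫⁻ x, ENNReal.ofReal (f x) ∂lam)
    (φ : X → ℝ) (hφ : Measurable φ) (hφ0 : 0 ≤ φ)
    (μ : Measure X)
    (hμ : μ = lam.withDensity fun x => ENNReal.ofReal (φ x)) :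
    (∀ f : X → ℝ, Measurable f → 0 ≤ f →
      ∫⁻ x, ENNReal.ofReal (R f x) ∂μ = ∫⁻ x, ENNReal.ofReal (f x) ∂μ) ↔
    (fun x => φ (σ x)) =ᵐ[lam] φ :=
  stmt_5_general σ hσ R hpull lam hRinv φ hφ hφ0 μ hμ
end

section
/- Let λ be a probability measure on X which is R-invariant (∫ R f dλ = ∫ f dλ for every nonnegative measurable f : X → ℝ), and suppose σ is measure-preserving and ergodic with respect to λ. Let μ be a finite measure on X with μ ≪ λ which is R-invariant (∫ R f dμ = ∫ f dμ for every nonnegative measurable f). Then there exists a constant c ≥ 0 such that μ = c • λ. -/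
/-!
Write `μ = h λ` with a real density `h ≥ 0`. For every nonnegative test function `g`, the
`R`-invariance of `λ` and the pull-out property give `∫ (h ∘ σ) g dλ = ∫ R((h ∘ σ) g) dλ =
∫ h (R g) dλ`, and the `R`-invariance of `μ` turns the last integral into `∫ h g dλ`. Hence
`h ∘ σ = h` `λ`-a.e., and ergodicity forces `h` to be a.e. constant.
-/

open MeasureTheory Filter
open scoped ENNReal NNReal

namespace MeasureTheory

variable {X : Type*} [MeasurableSpace X]

def IsTransferInvariant (R : (X → ℝ) → X → ℝ) (μ : Measure X) : Prop :=
  ∀ f : X → ℝ, Measurable f → 0 ≤ f →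
    ∫⁻ x, ENNReal.ofReal (R f x) ∂μ = ∫⁻ x, ENNReal.ofReal (f x) ∂μ

theorem Measure.AbsolutelyContinuous.exists_eq_withDensity_ofReal {μ lam : Measure X}
    [SigmaFinite μ] [μ.HaveLebesgueDecomposition lam] (hac : μ ≪ lam) :
    ∃ h : X → ℝ, Measurable h ∧ 0 ≤ h ∧
      μ = lam.withDensity fun x => ENNReal.ofReal (h x) := by
  refine ⟨fun x => (μ.rnDeriv lam x).toReal, (μ.measurable_rnDeriv lam).ennreal_toReal,
    fun x => ENNReal.toReal_nonneg, ?_⟩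
  conv_lhs => rw [← Measure.withDensity_rnDeriv_eq μ lam hac]
  refine withDensity_congr_ae ?_
  filter_upwards [μ.rnDeriv_lt_top lam] with x hx using (ENNReal.ofReal_toReal hx.ne).symm

theorem lintegral_ofReal_withDensity_ofReal (lam : Measure X) {h : X → ℝ} (hh : Measurable h)
    (hh0 : 0 ≤ h) (f : X → ℝ) :
    ∫⁻ x, ENNReal.ofReal (f x) ∂lam.withDensity (fun x => ENNReal.ofReal (h x)) =
      ∫⁻ x, ENNReal.ofReal (h x * f x) ∂lam := by
  rw [lintegral_withDensity_eq_lintegral_mul_non_measurable lam hh.ennreal_ofReal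
    (ae_of_all _ fun _ => ENNReal.ofReal_lt_top)]
  exact lintegral_congr fun x => (ENNReal.ofReal_mul (hh0 x)).symm

theorem ae_eq_of_forall_lintegral_ofReal_mul_eq {lam : Measure X} [SigmaFinite lam]
    {F G : X → ℝ} (hF : Measurable F) (hG : Measurable G) (hF0 : 0 ≤ F) (hG0 : 0 ≤ G)
    (hFG : ∀ g : X → ℝ, Measurable g → 0 ≤ g →
      ∫⁻ x, ENNReal.ofReal (F x * g x) ∂lam = ∫⁻ x, ENNReal.ofReal (G x * g x) ∂lam) :
    F =ᵐ[lam] G := by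
  have hofReal : (fun x => ENNReal.ofReal (F x)) =ᵐ[lam] fun x => ENNReal.ofReal (G x) := by
    refine ae_eq_of_forall_setLIntegral_eq_of_sigmaFinite hF.ennreal_ofReal hG.ennreal_ofReal
      fun s hs _ => ?_
    have hindicator (H : X → ℝ) :
        ∫⁻ x, ENNReal.ofReal (H x * s.indicator 1 x) ∂lam =
          ∫⁻ x in s, ENNReal.ofReal (H x) ∂lam := by
      rw [← lintegral_indicator hs]
      refine lintegral_congr fun x => ?_
      by_cases hx : x ∈ s <;> simp [hx]
    rw [← hindicator, ← hindicator]
    exact hFG _ (measurable_one.indicator hs) (Set.indicator_nonneg fun _ _ => zero_le_one)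
  filter_upwards [hofReal] with x hx
  exact (ENNReal.ofReal_eq_ofReal_iff (hF0 x) (hG0 x)).1 hx

theorem IsTransferInvariant.density_comp_ae_eq {σ : X → X} {R : (X → ℝ) → X → ℝ}
    {lam : Measure X} [SigmaFinite lam] (hσ : Measurable σ)
    (hpull : ∀ f g : X → ℝ, Measurable f → Measurable g → R ((f ∘ σ) * g) = f * R g)
    (hlam : IsTransferInvariant R lam) {h : X → ℝ} (hh : Measurable h) (hh0 : 0 ≤ h)
    (hμ : IsTransferInvariant R (lam.withDensity fun x => ENNReal.ofReal (h x))) :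
    h ∘ σ =ᵐ[lam] h := by
  refine ae_eq_of_forall_lintegral_ofReal_mul_eq (hh.comp hσ) hh (fun x => hh0 (σ x)) hh0
    fun g hg hg0 => ?_
  calc ∫⁻ x, ENNReal.ofReal (h (σ x) * g x) ∂lam
      = ∫⁻ x, ENNReal.ofReal (R ((h ∘ σ) * g) x) ∂lam :=
        (hlam _ ((hh.comp hσ).mul hg) fun x => mul_nonneg (hh0 _) (hg0 x)).symm
    _ = ∫⁻ x, ENNReal.ofReal (h x * R g x) ∂lam := by rw [hpull h g hh hg]; rfl
    _ = ∫⁻ x, ENNReal.ofReal (R g x) ∂lam.withDensity fun x => ENNReal.ofReal (h x) :=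
        (lintegral_ofReal_withDensity_ofReal lam hh hh0 _).symm
    _ = ∫⁻ x, ENNReal.ofReal (g x) ∂lam.withDensity fun x => ENNReal.ofReal (h x) :=
        hμ g hg hg0
    _ = ∫⁻ x, ENNReal.ofReal (h x * g x) ∂lam :=
        lintegral_ofReal_withDensity_ofReal lam hh hh0 _

theorem ergodic_of_forall_preimage_eq_measure_eq_zero_or_compl {σ : X → X} {lam : Measure X}
    (hmp : MeasurePreserving σ lam lam)
    (herg : ∀ A : Set X, MeasurableSet A → σ ⁻¹' A = A → lam A = 0 ∨ lam Aᶜ = 0) :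
    Ergodic σ lam :=
  ⟨hmp, ⟨fun s hs hsi =>
    eventuallyConst_set'.2 ((herg s hs hsi).imp ae_eq_empty.2 ae_eq_univ.2)⟩⟩

theorem Ergodic.exists_withDensity_ofReal_eq_smul {σ : X → X} {lam : Measure X}
    (hσ : Ergodic σ lam) {h : X → ℝ} (hh : Measurable h) (hinv : h ∘ σ =ᵐ[lam] h) :
    ∃ c : ℝ≥0, lam.withDensity (fun x => ENNReal.ofReal (h x)) = c • lam := by
  obtain ⟨c, hc⟩ := hσ.ae_eq_const_of_ae_eq_comp₀ hh.nullMeasurable hinv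
  refine ⟨c.toNNReal, ?_⟩
  calc lam.withDensity (fun x => ENNReal.ofReal (h x))
      = lam.withDensity (fun _ => ENNReal.ofReal c) := by
        refine withDensity_congr_ae ?_
        filter_upwards [hc] with x hx using congrArg ENNReal.ofReal hx
    _ = c.toNNReal • lam := withDensity_const _

end MeasureTheory

theorem stmt_6_general {X : Type*} [MeasurableSpace X] (σ : X → X)
    (R : (X → ℝ) → (X → ℝ))
    (hpull : ∀ f g : X → ℝ, Measurable f → Measurable g →
      R ((f ∘ σ) * g) = f * R g)
    (lam : Measure X) [IsProbabilityMeasure lam]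
    (hRinv : ∀ f : X → ℝ, Measurable f → 0 ≤ f →
      ∫⁻ x, ENNReal.ofReal (R f x) ∂lam = ∫⁻ x, ENNReal.ofReal (f x) ∂lam)
    (hmp : MeasurePreserving σ lam lam)
    (herg : ∀ A : Set X, MeasurableSet A → σ ⁻¹' A = A → lam A = 0 ∨ lam Aᶜ = 0)
    (μ : Measure X) [IsFiniteMeasure μ] (hac : μ ≪ lam)
    (hμinv : ∀ f : X → ℝ, Measurable f → 0 ≤ f →
      ∫⁻ x, ENNReal.ofReal (R f x) ∂μ = ∫⁻ x, ENNReal.ofReal (f x) ∂μ) :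
    ∃ c : NNReal, μ = c • lam := by
  obtain ⟨h, hh, hh0, rfl⟩ := hac.exists_eq_withDensity_ofReal
  have hinv : h ∘ σ =ᵐ[lam] h :=
    IsTransferInvariant.density_comp_ae_eq hmp.measurable hpull hRinv hh hh0 hμinv
  exact (ergodic_of_forall_preimage_eq_measure_eq_zero_or_compl hmp herg)
    |>.exists_withDensity_ofReal_eq_smul hh hinv

/-- If `λ` is an `R`-invariant probability measure and `σ` is measure preserving
and ergodic for `λ`, then every finite `R`-invariant measure `μ ≪ λ` is a
nonnegative multiple of `λ`. -/
theorem stmt_6 {X : Type*} [MeasurableSpace X] (σ : X → X)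
    (hσ : Measurable σ) (hσsurj : Function.Surjective σ)
    (R : (X → ℝ) → (X → ℝ))
    (hadd : ∀ f g : X → ℝ, R (f + g) = R f + R g)
    (hsmul : ∀ (c : ℝ) (f : X → ℝ), R (c • f) = c • R f)
    (hmeas : ∀ f : X → ℝ, Measurable f → Measurable (R f))
    (hpos : ∀ f : X → ℝ, 0 ≤ f → 0 ≤ R f)
    (hpull : ∀ f g : X → ℝ, Measurable f → Measurable g →
      R ((f ∘ σ) * g) = f * R g)
    (lam : Measure X) [IsProbabilityMeasure lam]
    (hRinv : ∀ f : X → ℝ, Measurable f → 0 ≤ f →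
      ∫⁻ x, ENNReal.ofReal (R f x) ∂lam = ∫⁻ x, ENNReal.ofReal (f x) ∂lam)
    (hmp : MeasurePreserving σ lam lam)
    (herg : ∀ A : Set X, MeasurableSet A → σ ⁻¹' A = A → lam A = 0 ∨ lam Aᶜ = 0)
    (μ : Measure X) [IsFiniteMeasure μ] (hac : μ ≪ lam)
    (hμinv : ∀ f : X → ℝ, Measurable f → 0 ≤ f →
      ∫⁻ x, ENNReal.ofReal (R f x) ∂μ = ∫⁻ x, ENNReal.ofReal (f x) ∂μ) :
    ∃ c : NNReal, μ = c • lam :=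
  stmt_6_general σ R hpull lam hRinv hmp herg μ hac hμinv
end

section
/- Let λ be a σ-finite measure on X which is R-invariant (∫ R f dλ = ∫ f dλ for every nonnegative measurable f : X → ℝ), and let h : X → ℝ be a nonnegative measurable λ-integrable function. Then R h = h λ-almost everywhere if and only if the measure λ.withDensity h is σ-invariant, i.e. Measure.map σ (λ.withDensity h) = λ.withDensity h. -/
/-!
Pushing `λ.withDensity h` forward by `σ` gives `λ.withDensity (R h)`: for measurable `A`, the
pull-out property gives `R (1_{σ⁻¹ A} · h) = 1_A · R h`, and `R`-invariance of `λ` equates the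
integrals of both sides. Densities with respect to a σ-finite measure are unique a.e., and both
`h` and `R h` are nonnegative, so the two measures agree iff `R h = h` a.e.
-/

open MeasureTheory

section TransferOperator

variable {X : Type*} [MeasurableSpace X] {μ : Measure X}

lemma lintegral_ofReal_indicator {s : Set X} (hs : MeasurableSet s) (g : X → ℝ) :
    ∫⁻ x, ENNReal.ofReal (s.indicator g x) ∂μ = ∫⁻ x in s, ENNReal.ofReal (g x) ∂μ := by
  rw [← lintegral_indicator hs]
  exact lintegral_congr fun x => (Set.indicator_comp_of_zero ENNReal.ofReal_zero).symm ▸ rfl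

lemma withDensity_ofReal_eq_iff [SigmaFinite μ] {f g : X → ℝ}
    (hf : AEMeasurable f μ) (hg : AEMeasurable g μ) (hf0 : 0 ≤ᵐ[μ] f) (hg0 : 0 ≤ᵐ[μ] g) :
    (μ.withDensity fun x => ENNReal.ofReal (f x)) = μ.withDensity (fun x => ENNReal.ofReal (g x)) ↔
      f =ᵐ[μ] g := by
  rw [withDensity_eq_iff_of_sigmaFinite hf.ennreal_ofReal hg.ennreal_ofReal]
  refine ⟨fun H => ?_, fun H => H.fun_comp ENNReal.ofReal⟩
  filter_upwards [H, hf0, hg0] with x hx hfx hgx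
  exact (ENNReal.ofReal_eq_ofReal_iff hfx hgx).mp hx

variable {σ : X → X} {R : (X → ℝ) → (X → ℝ)}

lemma setLIntegral_preimage_eq_setLIntegral_transfer (hσ : Measurable σ)
    (hpull : ∀ f g : X → ℝ, Measurable f → Measurable g → R ((f ∘ σ) * g) = f * R g)
    (hRinv : ∀ f : X → ℝ, Measurable f → 0 ≤ f →
      ∫⁻ x, ENNReal.ofReal (R f x) ∂μ = ∫⁻ x, ENNReal.ofReal (f x) ∂μ)
    {h : X → ℝ} (hh : Measurable h) (hh0 : 0 ≤ h) {A : Set X} (hA : MeasurableSet A) :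
    ∫⁻ x in σ ⁻¹' A, ENNReal.ofReal (h x) ∂μ = ∫⁻ x in A, ENNReal.ofReal (R h x) ∂μ := by
  have hind : Measurable (A.indicator (1 : X → ℝ)) := measurable_one.indicator hA
  have hpre : (A.indicator 1 ∘ σ) * h = (σ ⁻¹' A).indicator h := by
    ext x
    by_cases hx : σ x ∈ A <;> simp [hx]
  have hRpre : R ((σ ⁻¹' A).indicator h) = A.indicator (R h) := by
    rw [← hpre, hpull _ _ hind hh]
    ext x
    by_cases hx : x ∈ A <;> simp [hx]
  calc ∫⁻ x in σ ⁻¹' A, ENNReal.ofReal (h x) ∂μ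
      = ∫⁻ x, ENNReal.ofReal ((σ ⁻¹' A).indicator h x) ∂μ :=
        (lintegral_ofReal_indicator (hσ hA) h).symm
    _ = ∫⁻ x, ENNReal.ofReal (R ((σ ⁻¹' A).indicator h) x) ∂μ :=
        (hRinv _ (hh.indicator (hσ hA)) (Set.indicator_nonneg (fun x _ => hh0 x))).symm
    _ = ∫⁻ x in A, ENNReal.ofReal (R h x) ∂μ := by
        rw [hRpre, lintegral_ofReal_indicator hA]

lemma map_withDensity_ofReal_eq_withDensity_transfer (hσ : Measurable σ)
    (hpull : ∀ f g : X → ℝ, Measurable f → Measurable g → R ((f ∘ σ) * g) = f * R g)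
    (hRinv : ∀ f : X → ℝ, Measurable f → 0 ≤ f →
      ∫⁻ x, ENNReal.ofReal (R f x) ∂μ = ∫⁻ x, ENNReal.ofReal (f x) ∂μ)
    {h : X → ℝ} (hh : Measurable h) (hh0 : 0 ≤ h) :
    Measure.map σ (μ.withDensity fun x => ENNReal.ofReal (h x)) =
      μ.withDensity fun x => ENNReal.ofReal (R h x) := by
  ext A hA
  rw [Measure.map_apply hσ hA, withDensity_apply _ (hσ hA), withDensity_apply _ hA]
  exact setLIntegral_preimage_eq_setLIntegral_transfer hσ hpull hRinv hh hh0 hA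

end TransferOperator

theorem stmt_7_general {X : Type*} [MeasurableSpace X] (σ : X → X)
    (hσ : Measurable σ)
    (R : (X → ℝ) → (X → ℝ))
    (hmeas : ∀ f : X → ℝ, Measurable f → Measurable (R f))
    (hpos : ∀ f : X → ℝ, 0 ≤ f → 0 ≤ R f)
    (hpull : ∀ f g : X → ℝ, Measurable f → Measurable g →
      R ((f ∘ σ) * g) = f * R g)
    (lam : Measure X) [SigmaFinite lam]
    (hRinv : ∀ f : X → ℝ, Measurable f → 0 ≤ f →
      ∫⁻ x, ENNReal.ofReal (R f x) ∂lam = ∫⁻ x, ENNReal.ofReal (f x) ∂lam)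
    (h : X → ℝ) (hh : Measurable h) (hh0 : 0 ≤ h) :
    R h =ᵐ[lam] h ↔
      Measure.map σ (lam.withDensity fun x => ENNReal.ofReal (h x)) =
        lam.withDensity fun x => ENNReal.ofReal (h x) := by
  rw [map_withDensity_ofReal_eq_withDensity_transfer hσ hpull hRinv hh hh0,
    withDensity_ofReal_eq_iff (hmeas h hh).aemeasurable hh.aemeasurable
      (Filter.Eventually.of_forall (hpos h hh0)) (Filter.Eventually.of_forall hh0)]

/-- If `λ` is `R`-invariant and `h ≥ 0` is measurable and integrable, then
`R h = h` `λ`-a.e. iff the measure `λ.withDensity h` is `σ`-invariant. -/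
theorem stmt_7 {X : Type*} [MeasurableSpace X] (σ : X → X)
    (hσ : Measurable σ) (hσsurj : Function.Surjective σ)
    (R : (X → ℝ) → (X → ℝ))
    (hadd : ∀ f g : X → ℝ, R (f + g) = R f + R g)
    (hsmul : ∀ (c : ℝ) (f : X → ℝ), R (c • f) = c • R f)
    (hmeas : ∀ f : X → ℝ, Measurable f → Measurable (R f))
    (hpos : ∀ f : X → ℝ, 0 ≤ f → 0 ≤ R f)
    (hpull : ∀ f g : X → ℝ, Measurable f → Measurable g →
      R ((f ∘ σ) * g) = f * R g)
    (lam : Measure X) [SigmaFinite lam]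
    (hRinv : ∀ f : X → ℝ, Measurable f → 0 ≤ f →
      ∫⁻ x, ENNReal.ofReal (R f x) ∂lam = ∫⁻ x, ENNReal.ofReal (f x) ∂lam)
    (h : X → ℝ) (hh : Measurable h) (hh0 : 0 ≤ h) (hhint : Integrable h lam) :
    R h =ᵐ[lam] h ↔
      Measure.map σ (lam.withDensity fun x => ENNReal.ofReal (h x)) =
        lam.withDensity fun x => ENNReal.ofReal (h x) :=
  stmt_7_general σ hσ R hmeas hpos hpull lam hRinv h hh hh0
end

section
/- Let λ be a measure on X and W a nonnegative measurable function with ∫ R f dλ = ∫ f · W dλ for every nonnegative measurable f : X → ℝ. Suppose h : X → ℝ is a nonnegative measurable function with R h = h. Then for every nonnegative measurable f : X → ℝ one has ∫ W · ((f ∘ σ))² · h dλ = ∫ f² · h dλ; that is, the operator V : f ↦ √W · (f ∘ σ) is an isometry of L²(λ.withDensity h). -/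
open MeasureTheory

theorem lintegral_ofReal_weight_mul_comp_mul {X : Type*} [MeasurableSpace X] {σ : X → X}
    (hσ : Measurable σ) {R : (X → ℝ) → (X → ℝ)}
    (hpull : ∀ f g : X → ℝ, Measurable f → Measurable g → R ((f ∘ σ) * g) = f * R g)
    {lam : Measure X} {W : X → ℝ}
    (hRW : ∀ f : X → ℝ, Measurable f → 0 ≤ f →
      ∫⁻ x, ENNReal.ofReal (R f x) ∂lam = ∫⁻ x, ENNReal.ofReal (f x * W x) ∂lam)
    {f g : X → ℝ} (hf : Measurable f) (hf0 : 0 ≤ f) (hg : Measurable g) (hg0 : 0 ≤ g) :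
    ∫⁻ x, ENNReal.ofReal (W x * f (σ x) * g x) ∂lam =
      ∫⁻ x, ENNReal.ofReal (f x * R g x) ∂lam := by
  have hduality := hRW ((f ∘ σ) * g) ((hf.comp hσ).mul hg) fun x => mul_nonneg (hf0 _) (hg0 x)
  rw [hpull f g hf hg] at hduality
  simp only [Pi.mul_apply, Function.comp_apply] at hduality
  rw [hduality]
  simp only [mul_comm (W _), mul_assoc]

theorem stmt_9_general {X : Type*} [MeasurableSpace X] (σ : X → X)
    (hσ : Measurable σ)
    (R : (X → ℝ) → (X → ℝ))
    (hpull : ∀ f g : X → ℝ, Measurable f → Measurable g →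
      R ((f ∘ σ) * g) = f * R g)
    (lam : Measure X)
    (W : X → ℝ)
    (hRW : ∀ f : X → ℝ, Measurable f → 0 ≤ f →
      ∫⁻ x, ENNReal.ofReal (R f x) ∂lam = ∫⁻ x, ENNReal.ofReal (f x * W x) ∂lam)
    (h : X → ℝ) (hh : Measurable h) (hh0 : 0 ≤ h) (hharm : R h = h) :
    ∀ f : X → ℝ, Measurable f → 0 ≤ f →
      ∫⁻ x, ENNReal.ofReal (W x * f (σ x) ^ 2 * h x) ∂lam =
        ∫⁻ x, ENNReal.ofReal (f x ^ 2 * h x) ∂lam := by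
  intro f hf _
  have hisometry := lintegral_ofReal_weight_mul_comp_mul hσ hpull hRW (hf.pow_const 2)
    (fun x => sq_nonneg (f x)) hh hh0
  simpa only [Pi.pow_apply, hharm] using hisometry

/-- If `λR = λ.withDensity W` and `h ≥ 0` is harmonic (`R h = h`), then
`V : f ↦ √W · (f ∘ σ)` is an isometry of `L²(λ.withDensity h)`:
`∫ W · (f ∘ σ)² · h dλ = ∫ f² · h dλ` for all nonnegative measurable `f`. -/
theorem stmt_9 {X : Type*} [MeasurableSpace X] (σ : X → X)
    (hσ : Measurable σ) (hσsurj : Function.Surjective σ)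
    (R : (X → ℝ) → (X → ℝ))
    (hadd : ∀ f g : X → ℝ, R (f + g) = R f + R g)
    (hsmul : ∀ (c : ℝ) (f : X → ℝ), R (c • f) = c • R f)
    (hmeas : ∀ f : X → ℝ, Measurable f → Measurable (R f))
    (hpos : ∀ f : X → ℝ, 0 ≤ f → 0 ≤ R f)
    (hpull : ∀ f g : X → ℝ, Measurable f → Measurable g →
      R ((f ∘ σ) * g) = f * R g)
    (lam : Measure X)
    (W : X → ℝ) (hW : Measurable W) (hW0 : 0 ≤ W)
    (hRW : ∀ f : X → ℝ, Measurable f → 0 ≤ f →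
      ∫⁻ x, ENNReal.ofReal (R f x) ∂lam = ∫⁻ x, ENNReal.ofReal (f x * W x) ∂lam)
    (h : X → ℝ) (hh : Measurable h) (hh0 : 0 ≤ h) (hharm : R h = h) :
    ∀ f : X → ℝ, Measurable f → 0 ≤ f →
      ∫⁻ x, ENNReal.ofReal (W x * f (σ x) ^ 2 * h x) ∂lam =
        ∫⁻ x, ENNReal.ofReal (f x ^ 2 * h x) ∂lam :=
  stmt_9_general σ hσ R hpull lam W hRW h hh hh0 hharm
end

section
/- Suppose R is normalized (R 1 = 1). Let λ and λ′ be probability measures on X and let ν and ν′ be probability measures which are the actions of R on λ and λ′ respectively (∫ f dν = ∫ R f dλ and ∫ f dν′ = ∫ R f dλ′ for every bounded measurable f : X → ℝ). Then: (i) if ν = ν′ then λ = λ′ (the map λ ↦ λR is injective); (ii) λ and λ′ are mutually singular if and only if ν and ν′ are mutually singular; (iii) if Measure.map σ λ = λ and λ is itself the action of R on some probability measure μ, then ν = λ; conversely, if ν = λ then Measure.map σ λ = λ. -/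
open MeasureTheory

/-- For a normalized transfer operator: (i) `λ ↦ λR` is injective; (ii) `λ ⟂ λ'`
iff `λR ⟂ λ'R`; (iii) if `λ` is `σ`-invariant and lies in the range of `λ ↦ λR`,
then `λR = λ`, and conversely `λR = λ` implies `σ`-invariance of `λ`. -/
theorem stmt_10 {X : Type*} [MeasurableSpace X] (σ : X → X)
    (hσ : Measurable σ) (hσsurj : Function.Surjective σ)
    (R : (X → ℝ) → (X → ℝ))
    (hadd : ∀ f g : X → ℝ, R (f + g) = R f + R g)
    (hsmul : ∀ (c : ℝ) (f : X → ℝ), R (c • f) = c • R f)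
    (hmeas : ∀ f : X → ℝ, Measurable f → Measurable (R f))
    (hpos : ∀ f : X → ℝ, 0 ≤ f → 0 ≤ R f)
    (hpull : ∀ f g : X → ℝ, Measurable f → Measurable g →
      R ((f ∘ σ) * g) = f * R g)
    (hnorm : R 1 = 1)
    (lam lam' ν ν' : Measure X)
    [IsProbabilityMeasure lam] [IsProbabilityMeasure lam']
    [IsProbabilityMeasure ν] [IsProbabilityMeasure ν']
    (hν : ∀ f : X → ℝ, Measurable f → (∃ C : ℝ, ∀ x, |f x| ≤ C) →
      ∫ x, f x ∂ν = ∫ x, R f x ∂lam)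
    (hν' : ∀ f : X → ℝ, Measurable f → (∃ C : ℝ, ∀ x, |f x| ≤ C) →
      ∫ x, f x ∂ν' = ∫ x, R f x ∂lam') :
    (ν = ν' → lam = lam') ∧
    (lam ⟂ₘ lam' ↔ ν ⟂ₘ ν') ∧
    ((Measure.map σ lam = lam ∧
        ∃ μ : Measure X, IsProbabilityMeasure μ ∧
          ∀ f : X → ℝ, Measurable f → (∃ C : ℝ, ∀ x, |f x| ≤ C) →
            ∫ x, f x ∂lam = ∫ x, R f x ∂μ) → ν = lam) ∧
    (ν = lam → Measure.map σ lam = lam) := by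
  classical
  -- R is subtractive and monotone
  have hsub : ∀ f g : X → ℝ, R (f - g) = R f - R g := by
    intro f g
    have h1 : R ((f - g) + g) = R (f - g) + R g := hadd _ _
    rw [sub_add_cancel] at h1
    rw [h1]; ring
  have hmono : ∀ f g : X → ℝ, f ≤ g → R f ≤ R g := by
    intro f g hfg x
    have h0 : (0 : X → ℝ) ≤ g - f := fun y => sub_nonneg.mpr (hfg y)
    have := hpos _ h0 x
    rw [hsub] at this
    simpa [sub_nonneg] using this
  have hconst : ∀ c : ℝ, R (fun _ => c) = fun _ => c := by
    intro c
    have h1 : (fun _ : X => c) = c • (1 : X → ℝ) := by ext x; simp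
    rw [h1, hsmul, hnorm]
  have hRbound : ∀ (f : X → ℝ) (C : ℝ), (∀ x, |f x| ≤ C) → ∀ x, |R f x| ≤ C := by
    intro f C hC x
    have h1 : f ≤ fun _ => C := fun y => (abs_le.1 (hC y)).2
    have h2 : (fun _ : X => -C) ≤ f := fun y => (abs_le.1 (hC y)).1
    have b1 := hmono _ _ h1 x
    have b2 := hmono _ _ h2 x
    rw [hconst] at b1 b2
    exact abs_le.2 ⟨b2, b1⟩
  have hRσ : ∀ f : X → ℝ, Measurable f → R (f ∘ σ) = f := by
    intro f hf
    have h1 := hpull f 1 hf measurable_one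
    rw [hnorm, mul_one, mul_one] at h1
    exact h1
  -- indicator facts
  have hindb : ∀ s : Set X, ∀ x, |s.indicator (1 : X → ℝ) x| ≤ 1 := by
    intro s x
    by_cases h : x ∈ s <;> simp [h]
  have hindint : ∀ (p : Measure X), ∀ s : Set X, MeasurableSet s →
      ∫ x, s.indicator (1 : X → ℝ) x ∂p = (p s).toReal := by
    intro p s hs
    have : s.indicator (1 : X → ℝ) = s.indicator (fun _ => (1 : ℝ)) := rfl
    rw [this, integral_indicator_const (1 : ℝ) hs, smul_eq_mul, mul_one]
    rfl
  -- integrability of bounded measurable functions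
  have hInt : ∀ (p : Measure X) (_ : IsFiniteMeasure p) (f : X → ℝ) (C : ℝ),
      Measurable f → (∀ x, |f x| ≤ C) → Integrable f p := by
    intro p hp f C hf hC
    exact (integrable_const C).mono' hf.aestronglyMeasurable (Filter.Eventually.of_forall hC)
  -- key: if q is the action of R on p, then map σ q = p
  have key : ∀ (p q : Measure X), IsProbabilityMeasure p → IsProbabilityMeasure q →
      (∀ f : X → ℝ, Measurable f → (∃ C : ℝ, ∀ x, |f x| ≤ C) →
        ∫ x, f x ∂q = ∫ x, R f x ∂p) →
      Measure.map σ q = p := by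
    intro p q hp hq hact
    ext s hs
    rw [Measure.map_apply hσ hs]
    have hindm : Measurable (s.indicator (1 : X → ℝ)) := measurable_one.indicator hs
    have hcomp : (s.indicator (1 : X → ℝ)) ∘ σ = (σ ⁻¹' s).indicator (1 : X → ℝ) := by
      ext x
      by_cases h : σ x ∈ s <;> simp [h, Set.indicator_apply, Function.comp]
    have h2 : R ((σ ⁻¹' s).indicator (1 : X → ℝ)) = s.indicator 1 := by
      rw [← hcomp]; exact hRσ _ hindm
    have h1 := hact _ (measurable_one.indicator (hσ hs)) ⟨1, hindb _⟩
    rw [h2, hindint q _ (hσ hs), hindint p _ hs] at h1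
    exact (ENNReal.toReal_eq_toReal_iff' (measure_ne_top q _) (measure_ne_top p _)).1 h1
  have hmapν : Measure.map σ ν = lam := key lam ν ‹_› ‹_› hν
  have hmapν' : Measure.map σ ν' = lam' := key lam' ν' ‹_› ‹_› hν'
  refine ⟨?_, ⟨?_, ?_⟩, ?_, ?_⟩
  · -- injectivity
    intro h
    rw [← hmapν, ← hmapν', h]
  · -- lam ⟂ lam' → ν ⟂ ν'
    rintro ⟨s, hs, h1, h2⟩
    refine ⟨σ ⁻¹' s, hσ hs, ?_, ?_⟩
    · rw [← Measure.map_apply hσ hs, hmapν]; exact h1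
    · rw [← Set.preimage_compl, ← Measure.map_apply hσ hs.compl, hmapν']; exact h2
  · -- ν ⟂ ν' → lam ⟂ lam'
    rintro ⟨A, hA, h1, h2⟩
    set g := R (A.indicator (1 : X → ℝ)) with hg
    set g' := R (Aᶜ.indicator (1 : X → ℝ)) with hg'
    have hgm : Measurable g := hmeas _ (measurable_one.indicator hA)
    have hg'm : Measurable g' := hmeas _ (measurable_one.indicator hA.compl)
    have hgnn : 0 ≤ g := hpos _ (fun x => Set.indicator_nonneg (fun _ _ => zero_le_one) x)
    have hg'nn : 0 ≤ g' := hpos _ (fun x => Set.indicator_nonneg (fun _ _ => zero_le_one) x)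
    -- ∫ g dlam = 0
    have hgint : Integrable g lam := hInt lam inferInstance g 1 hgm (hRbound _ 1 (hindb A))
    have hg'int : Integrable g' lam' := hInt lam' inferInstance g' 1 hg'm (hRbound _ 1 (hindb Aᶜ))
    have hgz : ∫ x, g x ∂lam = 0 := by
      rw [← hν _ (measurable_one.indicator hA) ⟨1, hindb A⟩, hindint ν A hA, h1]
      simp
    have hg'z : ∫ x, g' x ∂lam' = 0 := by
      rw [← hν' _ (measurable_one.indicator hA.compl) ⟨1, hindb Aᶜ⟩, hindint ν' Aᶜ hA.compl, h2]
      simp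
    have hgae : g =ᵐ[lam] 0 := (integral_eq_zero_iff_of_nonneg hgnn hgint).1 hgz
    have hg'ae : g' =ᵐ[lam'] 0 := (integral_eq_zero_iff_of_nonneg hg'nn hg'int).1 hg'z
    have hsum : ∀ x, g x + g' x = 1 := by
      intro x
      have hind : A.indicator (1 : X → ℝ) + Aᶜ.indicator (1 : X → ℝ) = 1 := by
        ext y; by_cases h : y ∈ A <;> simp [h]
      have := hadd (A.indicator 1) (Aᶜ.indicator 1)
      rw [hind, hnorm] at this
      have := congrFun this x
      simpa [hg, hg'] using this.symm
    have hlamz : lam ((g ⁻¹' {0})ᶜ) = 0 := by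
      have h := hgae
      rw [Filter.EventuallyEq, ae_iff] at h
      convert h using 2
      ext x; simp
    have hlam'z : lam' (g' ⁻¹' {0})ᶜ = 0 := by
      have h := hg'ae
      rw [Filter.EventuallyEq, ae_iff] at h
      convert h using 2
      ext x; simp
    refine ⟨(g ⁻¹' {0})ᶜ, (hgm (measurableSet_singleton 0)).compl, hlamz, ?_⟩
    rw [compl_compl]
    refine measure_mono_null (fun x hx => ?_) hlam'z
    simp only [Set.mem_preimage, Set.mem_singleton_iff] at hx
    have := hsum x
    rw [hx, zero_add] at this
    simp [this]
  · -- invariant and in range ⇒ ν = lam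
    rintro ⟨hinv, μ, hμ, hμact⟩
    have hmapl : Measure.map σ lam = μ := key μ lam hμ ‹_› hμact
    have hμlam : μ = lam := by rw [← hmapl, hinv]
    ext s hs
    have hindm : Measurable (s.indicator (1 : X → ℝ)) := measurable_one.indicator hs
    have h1 := hν _ hindm ⟨1, hindb s⟩
    have h2 := hμact _ hindm ⟨1, hindb s⟩
    rw [hμlam] at h2
    have h3 : ∫ x, s.indicator (1 : X → ℝ) x ∂ν = ∫ x, s.indicator (1 : X → ℝ) x ∂lam := by
      rw [h1, ← h2]
    rw [hindint ν s hs, hindint lam s hs] at h3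
    exact (ENNReal.toReal_eq_toReal_iff' (measure_ne_top ν _) (measure_ne_top lam _)).1 h3
  · -- ν = lam ⇒ invariance
    intro h
    subst h
    exact hmapν
end

section
/- Let λ be a finite measure on X with R 1 λ-integrable, and let ν be a finite measure which is the action of R on λ (∫ f dν = ∫ R f dλ for every bounded measurable f : X → ℝ). Then Measure.map σ ν = λ.withDensity (R 1). In particular, if R is normalized (R 1 = 1), then Measure.map σ ν = λ, i.e. (λR) ∘ σ⁻¹ = λ. -/
/-!
Applying the pull-out property with `f = 1_s` and `g = 1` gives `R 1_{σ⁻¹ s} = 1_s · R 1`, so the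
action identity yields `ν (σ⁻¹ s) = ∫_s R 1 dλ` for every measurable `s`, which identifies
`σ_* ν` with the measure of density `R 1` with respect to `λ`.
-/

open MeasureTheory

theorem MeasureTheory.Measure.eq_withDensity_ofReal_of_measureReal_eq_setIntegral {X : Type*}
    [MeasurableSpace X] {μ lam : Measure X} [IsFiniteMeasure μ] {g : X → ℝ}
    (hg : Integrable g lam) (hg_nonneg : 0 ≤ᵐ[lam] g)
    (h : ∀ s, MeasurableSet s → μ.real s = ∫ x in s, g x ∂lam) :
    μ = lam.withDensity (fun x => ENNReal.ofReal (g x)) := by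
  ext s hs
  rw [withDensity_apply _ hs, ← ofReal_integral_eq_lintegral_ofReal hg.restrict
    (ae_restrict_of_ae hg_nonneg), ← h s hs, ofReal_measureReal (measure_ne_top μ s)]

section TransferOperator

variable {X : Type*} [MeasurableSpace X] {σ : X → X} {R : (X → ℝ) → (X → ℝ)}

theorem transfer_indicator_preimage
    (hpull : ∀ f g : X → ℝ, Measurable f → Measurable g → R ((f ∘ σ) * g) = f * R g)
    {s : Set X} (hs : MeasurableSet s) :
    R ((σ ⁻¹' s).indicator 1) = s.indicator (R 1) := by
  have h := hpull (s.indicator 1) 1 (measurable_one.indicator hs) measurable_one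
  have hcomp : s.indicator 1 ∘ σ * 1 = (σ ⁻¹' s).indicator (1 : X → ℝ) := by
    ext x
    by_cases hx : σ x ∈ s <;> simp [hx]
  have hmul : s.indicator 1 * R 1 = s.indicator (R 1) := by
    ext x
    by_cases hx : x ∈ s <;> simp [hx]
  rwa [hcomp, hmul] at h

theorem measureReal_preimage_eq_setIntegral_transfer_one (hσ : Measurable σ)
    (hpull : ∀ f g : X → ℝ, Measurable f → Measurable g → R ((f ∘ σ) * g) = f * R g)
    {lam ν : Measure X}
    (hν : ∀ f : X → ℝ, Measurable f → (∃ C : ℝ, ∀ x, |f x| ≤ C) →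
      ∫ x, f x ∂ν = ∫ x, R f x ∂lam)
    {s : Set X} (hs : MeasurableSet s) :
    ν.real (σ ⁻¹' s) = ∫ x in s, R 1 x ∂lam := by
  have hbdd : ∃ C : ℝ, ∀ x, |(σ ⁻¹' s).indicator (1 : X → ℝ) x| ≤ C :=
    ⟨1, fun x => by by_cases hx : σ x ∈ s <;> simp [hx]⟩
  calc ν.real (σ ⁻¹' s) = ∫ x, (σ ⁻¹' s).indicator 1 x ∂ν := (integral_indicator_one (hσ hs)).symm
    _ = ∫ x, s.indicator (R 1) x ∂lam := by
      rw [hν _ (measurable_one.indicator (hσ hs)) hbdd, transfer_indicator_preimage hpull hs]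
    _ = ∫ x in s, R 1 x ∂lam := integral_indicator hs

end TransferOperator

theorem stmt_11_general {X : Type*} [MeasurableSpace X] (σ : X → X)
    (hσ : Measurable σ)
    (R : (X → ℝ) → (X → ℝ))
    (hpos : ∀ f : X → ℝ, 0 ≤ f → 0 ≤ R f)
    (hpull : ∀ f g : X → ℝ, Measurable f → Measurable g →
      R ((f ∘ σ) * g) = f * R g)
    (lam : Measure X)
    (hint : Integrable (R 1) lam)
    (ν : Measure X) [IsFiniteMeasure ν]
    (hν : ∀ f : X → ℝ, Measurable f → (∃ C : ℝ, ∀ x, |f x| ≤ C) →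
      ∫ x, f x ∂ν = ∫ x, R f x ∂lam) :
    Measure.map σ ν = lam.withDensity (fun x => ENNReal.ofReal (R 1 x)) ∧
      (R 1 = 1 → Measure.map σ ν = lam) := by
  have hmap : Measure.map σ ν = lam.withDensity (fun x => ENNReal.ofReal (R 1 x)) :=
    Measure.eq_withDensity_ofReal_of_measureReal_eq_setIntegral hint
      (.of_forall (hpos 1 zero_le_one)) fun s hs => by
        rw [map_measureReal_apply hσ hs]
        exact measureReal_preimage_eq_setIntegral_transfer_one hσ hpull hν hs
  refine ⟨hmap, fun hR1 => ?_⟩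
  simp [hmap, hR1]

/-- `(λR) ∘ σ⁻¹ = λ.withDensity (R 1)`; in particular `(λR) ∘ σ⁻¹ = λ` when `R`
is normalized. -/
theorem stmt_11 {X : Type*} [MeasurableSpace X] (σ : X → X)
    (hσ : Measurable σ) (hσsurj : Function.Surjective σ)
    (R : (X → ℝ) → (X → ℝ))
    (hadd : ∀ f g : X → ℝ, R (f + g) = R f + R g)
    (hsmul : ∀ (c : ℝ) (f : X → ℝ), R (c • f) = c • R f)
    (hmeas : ∀ f : X → ℝ, Measurable f → Measurable (R f))
    (hpos : ∀ f : X → ℝ, 0 ≤ f → 0 ≤ R f)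
    (hpull : ∀ f g : X → ℝ, Measurable f → Measurable g →
      R ((f ∘ σ) * g) = f * R g)
    (lam : Measure X) [IsFiniteMeasure lam]
    (hint : Integrable (R 1) lam)
    (ν : Measure X) [IsFiniteMeasure ν]
    (hν : ∀ f : X → ℝ, Measurable f → (∃ C : ℝ, ∀ x, |f x| ≤ C) →
      ∫ x, f x ∂ν = ∫ x, R f x ∂lam) :
    Measure.map σ ν = lam.withDensity (fun x => ENNReal.ofReal (R 1 x)) ∧
      (R 1 = 1 → Measure.map σ ν = lam) :=
  stmt_11_general σ hσ R hpos hpull lam hint ν hν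
end

section
/- Suppose R is normalized (R 1 = 1). Let ν be a finite measure on X and let λ be the action of R on ν (∫ f dλ = ∫ R f dν for every bounded measurable f : X → ℝ). Then for all bounded measurable f₁, f₂ : X → ℝ one has ∫ ((R f₁) ∘ σ) · f₂ dλ = ∫ (R f₁) · (R f₂) dν, and consequently ∫ ((R f₁) ∘ σ) · f₂ dλ = ∫ f₁ · ((R f₂) ∘ σ) dλ; that is, the operator f ↦ (R f) ∘ σ is self-adjoint on L²(λ). -/
/-!
Positivity and `R 1 = 1` make `R f` bounded by any bound of `f`, so `λ = νR` applies to the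
bounded function `(R f₁ ∘ σ) · f₂`, which the pull-out property sends to `R f₁ · R f₂`.
The resulting integral against `ν` is symmetric in `f₁` and `f₂`.
-/

open MeasureTheory

lemma LinearMap.monotone_of_nonneg {α β : Type*} (T : (α → ℝ) →ₗ[ℝ] (β → ℝ))
    (hpos : ∀ f, 0 ≤ f → 0 ≤ T f) : Monotone T := fun f g hfg => by
  simpa using hpos (g - f) (sub_nonneg.2 hfg)

lemma LinearMap.abs_apply_le_of_abs_le {α β : Type*} (T : (α → ℝ) →ₗ[ℝ] (β → ℝ))
    (hpos : ∀ f, 0 ≤ f → 0 ≤ T f) (hnorm : T 1 = 1) {f : α → ℝ} {C : ℝ}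
    (hf : ∀ x, |f x| ≤ C) (y : β) : |T f y| ≤ C := by
  have hconst : T (C • 1) = C • 1 := by rw [map_smul, hnorm]
  have hle : T f ≤ C • 1 := hconst ▸ T.monotone_of_nonneg hpos fun x => by
    simpa using (abs_le.1 (hf x)).2
  have hge : -(C • 1) ≤ T f := by
    rw [← hconst, ← map_neg]
    exact T.monotone_of_nonneg hpos fun x => by simpa using (abs_le.1 (hf x)).1
  exact abs_le.2 ⟨by simpa using hge y, by simpa using hle y⟩

lemma exists_abs_mul_le {α : Type*} {f g : α → ℝ} (hf : ∃ C, ∀ x, |f x| ≤ C)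
    (hg : ∃ C, ∀ x, |g x| ≤ C) : ∃ C, ∀ x, |(f * g) x| ≤ C := by
  obtain ⟨C₁, hC₁⟩ := hf
  obtain ⟨C₂, hC₂⟩ := hg
  exact ⟨C₁ * C₂, fun x => by
    rw [Pi.mul_apply, abs_mul]
    exact mul_le_mul (hC₁ x) (hC₂ x) (abs_nonneg _) ((abs_nonneg _).trans (hC₁ x))⟩

lemma integral_comp_mul_eq_integral_mul_of_pullOut {X : Type*} [MeasurableSpace X]
    {σ : X → X} (hσ : Measurable σ) {R : (X → ℝ) → (X → ℝ)}
    (hmeas : ∀ f : X → ℝ, Measurable f → Measurable (R f))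
    (hpull : ∀ f g : X → ℝ, Measurable f → Measurable g → R ((f ∘ σ) * g) = f * R g)
    {ν lam : Measure X}
    (hlam : ∀ f : X → ℝ, Measurable f → (∃ C : ℝ, ∀ x, |f x| ≤ C) →
      ∫ x, f x ∂lam = ∫ x, R f x ∂ν)
    {f₁ f₂ : X → ℝ} (hm₁ : Measurable f₁) (hm₂ : Measurable f₂)
    (hb₁ : ∃ C : ℝ, ∀ x, |R f₁ x| ≤ C) (hb₂ : ∃ C : ℝ, ∀ x, |f₂ x| ≤ C) :
    ∫ x, R f₁ (σ x) * f₂ x ∂lam = ∫ x, R f₁ x * R f₂ x ∂ν := by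
  have hbσ : ∃ C : ℝ, ∀ x, |(R f₁ ∘ σ) x| ≤ C :=
    hb₁.imp fun C hC x => hC (σ x)
  simpa [hpull (R f₁) f₂ (hmeas f₁ hm₁) hm₂] using
    hlam _ (((hmeas f₁ hm₁).comp hσ).mul hm₂) (exists_abs_mul_le hbσ hb₂)

theorem stmt_12_general {X : Type*} [MeasurableSpace X] (σ : X → X)
    (hσ : Measurable σ)
    (R : (X → ℝ) → (X → ℝ))
    (hadd : ∀ f g : X → ℝ, R (f + g) = R f + R g)
    (hsmul : ∀ (c : ℝ) (f : X → ℝ), R (c • f) = c • R f)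
    (hmeas : ∀ f : X → ℝ, Measurable f → Measurable (R f))
    (hpos : ∀ f : X → ℝ, 0 ≤ f → 0 ≤ R f)
    (hpull : ∀ f g : X → ℝ, Measurable f → Measurable g →
      R ((f ∘ σ) * g) = f * R g)
    (hnorm : R 1 = 1)
    (ν : Measure X)
    (lam : Measure X)
    (hlam : ∀ f : X → ℝ, Measurable f → (∃ C : ℝ, ∀ x, |f x| ≤ C) →
      ∫ x, f x ∂lam = ∫ x, R f x ∂ν) :
    ∀ f₁ f₂ : X → ℝ, Measurable f₁ → Measurable f₂ →
      (∃ C : ℝ, ∀ x, |f₁ x| ≤ C) → (∃ C : ℝ, ∀ x, |f₂ x| ≤ C) →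
      (∫ x, R f₁ (σ x) * f₂ x ∂lam = ∫ x, R f₁ x * R f₂ x ∂ν) ∧
      (∫ x, R f₁ (σ x) * f₂ x ∂lam = ∫ x, f₁ x * R f₂ (σ x) ∂lam) := by
  intro f₁ f₂ hm₁ hm₂ hb₁ hb₂
  let T : (X → ℝ) →ₗ[ℝ] (X → ℝ) := ⟨⟨R, hadd⟩, hsmul⟩
  have hRb : ∀ {f : X → ℝ}, (∃ C : ℝ, ∀ x, |f x| ≤ C) → ∃ C : ℝ, ∀ x, |R f x| ≤ C :=
    fun hb => hb.imp fun _ hC => T.abs_apply_le_of_abs_le hpos hnorm hC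
  have h₁₂ := integral_comp_mul_eq_integral_mul_of_pullOut hσ hmeas hpull hlam hm₁ hm₂
    (hRb hb₁) hb₂
  have h₂₁ := integral_comp_mul_eq_integral_mul_of_pullOut hσ hmeas hpull hlam hm₂ hm₁
    (hRb hb₂) hb₁
  refine ⟨h₁₂, ?_⟩
  simp_rw [h₁₂, mul_comm (f₁ _), h₂₁, mul_comm]

/-- If `R` is normalized and `λ = νR`, then
`∫ ((R f₁) ∘ σ) · f₂ dλ = ∫ (R f₁) · (R f₂) dν`, hence the operator
`f ↦ (R f) ∘ σ` is self-adjoint on `L²(λ)`. -/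
theorem stmt_12 {X : Type*} [MeasurableSpace X] (σ : X → X)
    (hσ : Measurable σ) (hσsurj : Function.Surjective σ)
    (R : (X → ℝ) → (X → ℝ))
    (hadd : ∀ f g : X → ℝ, R (f + g) = R f + R g)
    (hsmul : ∀ (c : ℝ) (f : X → ℝ), R (c • f) = c • R f)
    (hmeas : ∀ f : X → ℝ, Measurable f → Measurable (R f))
    (hpos : ∀ f : X → ℝ, 0 ≤ f → 0 ≤ R f)
    (hpull : ∀ f g : X → ℝ, Measurable f → Measurable g →
      R ((f ∘ σ) * g) = f * R g)
    (hnorm : R 1 = 1)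
    (ν : Measure X) [IsFiniteMeasure ν]
    (lam : Measure X) [IsFiniteMeasure lam]
    (hlam : ∀ f : X → ℝ, Measurable f → (∃ C : ℝ, ∀ x, |f x| ≤ C) →
      ∫ x, f x ∂lam = ∫ x, R f x ∂ν) :
    ∀ f₁ f₂ : X → ℝ, Measurable f₁ → Measurable f₂ →
      (∃ C : ℝ, ∀ x, |f₁ x| ≤ C) → (∃ C : ℝ, ∀ x, |f₂ x| ≤ C) →
      (∫ x, R f₁ (σ x) * f₂ x ∂lam = ∫ x, R f₁ x * R f₂ x ∂ν) ∧
      (∫ x, R f₁ (σ x) * f₂ x ∂lam = ∫ x, f₁ x * R f₂ (σ x) ∂lam) :=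
  stmt_12_general σ hσ R hadd hsmul hmeas hpos hpull hnorm ν lam hlam
end

section
/- Let X be a measurable space, σ : X → X a measurable surjection, and λ a σ-finite measure on X such that Measure.map σ λ and λ are mutually absolutely continuous; let θ_λ denote the Radon–Nikodym derivative of Measure.map σ λ with respect to λ, and let R_λ be the Frobenius–Perron transfer operator of λ. Then the following are equivalent: (i) R_λ admits a σ⁻¹(B)-measurable harmonic function, i.e. there exists a measurable q : X → [0, ∞) with q > 0 λ-almost everywhere such that R_λ (q ∘ σ) = q ∘ σ λ-almost everywhere; (ii) θ_λ is a σ-coboundary, i.e. there exists a measurable q : X → [0, ∞) with q > 0 λ-almost everywhere such that θ_λ · q = q ∘ σ λ-almost everywhere. -/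
open MeasureTheory
open scoped ENNReal

namespace MeasureTheory.Measure

variable {X Y : Type*} [MeasurableSpace X] [MeasurableSpace Y] {σ : X → Y}

theorem map_withDensity_comp (hσ : Measurable σ) (μ : Measure X) {f : Y → ℝ≥0∞}
    (hf : Measurable f) :
    map σ (μ.withDensity fun x => f (σ x)) = (map σ μ).withDensity f := by
  ext s hs
  rw [map_apply hσ hs, withDensity_apply _ (hσ hs), withDensity_apply _ hs,
    setLIntegral_map hs hf hσ]

/-- In the notation of transfer operators: `R_μ (f ∘ σ) = θ_μ * f`. -/
theorem rnDeriv_map_withDensity_comp (hσ : Measurable σ) (μ : Measure X) [SFinite μ]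
    (ν : Measure Y) [SigmaFinite ν] (hac : map σ μ ≪ ν) {f : Y → ℝ≥0∞} (hf : Measurable f) :
    (map σ (μ.withDensity fun x => f (σ x))).rnDeriv ν
      =ᵐ[ν] fun y => (map σ μ).rnDeriv ν y * f y := by
  have hdens : (map σ μ).withDensity f = ν.withDensity ((map σ μ).rnDeriv ν * f) := by
    rw [withDensity_mul ν (measurable_rnDeriv _ _) hf, withDensity_rnDeriv_eq _ _ hac]
  rw [map_withDensity_comp hσ μ hf, hdens]
  exact rnDeriv_withDensity ν ((measurable_rnDeriv _ _).mul hf)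

end MeasureTheory.Measure

theorem stmt_14_general {X : Type*} [MeasurableSpace X] (σ : X → X) (hσ : Measurable σ)
    (lam : Measure X) [SigmaFinite lam]
    (hac : Measure.map σ lam ≪ lam) :
    (∃ q : X → NNReal, Measurable q ∧ (∀ᵐ x ∂lam, 0 < q x) ∧
      (Measure.map σ (lam.withDensity fun x => (q (σ x) : ℝ≥0∞))).rnDeriv lam
        =ᵐ[lam] fun x => (q (σ x) : ℝ≥0∞)) ↔
    (∃ q : X → NNReal, Measurable q ∧ (∀ᵐ x ∂lam, 0 < q x) ∧
      (fun x => (Measure.map σ lam).rnDeriv lam x * (q x : ℝ≥0∞)) =ᵐ[lam]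
        fun x => (q (σ x) : ℝ≥0∞)) := by
  refine exists_congr fun q => and_congr_right fun hq => and_congr_right fun _ => ?_
  have htransfer := Measure.rnDeriv_map_withDensity_comp hσ lam lam hac hq.coe_nnreal_ennreal
  exact ⟨htransfer.symm.trans, htransfer.trans⟩

/-- For the Frobenius–Perron operator `R_λ` of a non-singular surjective `σ`
(with `Measure.map σ λ ∼ λ`): `R_λ` admits a `σ⁻¹(B)`-measurable harmonic
function iff the Radon–Nikodym derivative `θ_λ` is a `σ`-coboundary. -/
theorem stmt_14 {X : Type*} [MeasurableSpace X] (σ : X → X) (hσ : Measurable σ)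
    (hσsurj : Function.Surjective σ)
    (lam : Measure X) [SigmaFinite lam]
    (hac : Measure.map σ lam ≪ lam) (hac' : lam ≪ Measure.map σ lam) :
    (∃ q : X → NNReal, Measurable q ∧ (∀ᵐ x ∂lam, 0 < q x) ∧
      (Measure.map σ (lam.withDensity fun x => (q (σ x) : ℝ≥0∞))).rnDeriv lam
        =ᵐ[lam] fun x => (q (σ x) : ℝ≥0∞)) ↔
    (∃ q : X → NNReal, Measurable q ∧ (∀ᵐ x ∂lam, 0 < q x) ∧
      (fun x => (Measure.map σ lam).rnDeriv lam x * (q x : ℝ≥0∞)) =ᵐ[lam]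
        fun x => (q (σ x) : ℝ≥0∞)) :=
  stmt_14_general σ hσ lam hac
end

section
/- Suppose R is normalized (R 1 = 1) and has the Riesz property: there is a family of finite measures (μ_x)_{x ∈ X} on X such that (R f)(x) = ∫ f dμ_x for every bounded measurable f : X → ℝ and every x ∈ X. Then for every x ∈ X, μ_x is a probability measure and Measure.map σ μ_x = Measure.dirac x (the Dirac point mass at x). -/
open MeasureTheory

/-- If a normalized transfer operator `R` has the Riesz property with Riesz
family `(μ_x)`, then each `μ_x` is a probability measure and
`Measure.map σ μ_x = δ_x`. -/
theorem stmt_15 {X : Type*} [MeasurableSpace X] (σ : X → X)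
    (hσ : Measurable σ) (hσsurj : Function.Surjective σ)
    (R : (X → ℝ) → (X → ℝ))
    (hadd : ∀ f g : X → ℝ, R (f + g) = R f + R g)
    (hsmul : ∀ (c : ℝ) (f : X → ℝ), R (c • f) = c • R f)
    (hmeas : ∀ f : X → ℝ, Measurable f → Measurable (R f))
    (hpos : ∀ f : X → ℝ, 0 ≤ f → 0 ≤ R f)
    (hpull : ∀ f g : X → ℝ, Measurable f → Measurable g →
      R ((f ∘ σ) * g) = f * R g)
    (hnorm : R 1 = 1)
    (μ : X → Measure X) (hfin : ∀ x, IsFiniteMeasure (μ x))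
    (hRiesz : ∀ f : X → ℝ, Measurable f → (∃ C : ℝ, ∀ y, |f y| ≤ C) →
      ∀ x, R f x = ∫ y, f y ∂(μ x)) :
    ∀ x : X, IsProbabilityMeasure (μ x) ∧ Measure.map σ (μ x) = Measure.dirac x := by
  intro x
  have hfinx := hfin x
  have h1 : R (1 : X → ℝ) x = ∫ y, (1 : ℝ) ∂(μ x) := by
    exact hRiesz 1 measurable_one ⟨1, fun y => by simp⟩ x
  have huniv : μ x Set.univ = 1 := by
    rw [hnorm] at h1
    simp only [Pi.one_apply, integral_const, smul_eq_mul, mul_one] at h1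
    have := h1.symm
    have hfin' : μ x Set.univ ≠ ⊤ := measure_ne_top _ _
    rw [← ENNReal.toReal_eq_one_iff]
    exact this.symm ▸ rfl
  have hprob : IsProbabilityMeasure (μ x) := ⟨huniv⟩
  refine ⟨hprob, ?_⟩
  -- key: for measurable s, μ x (σ⁻¹ s) equals dirac x s
  have key : ∀ s : Set X, MeasurableSet s → μ x (σ ⁻¹' s) = Measure.dirac x s := by
    intro s hs
    set f : X → ℝ := s.indicator 1 with hf
    have hfmeas : Measurable f := measurable_one.indicator hs
    have hbd : ∃ C : ℝ, ∀ y, |f y| ≤ C := ⟨1, fun y => by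
      by_cases hy : y ∈ s <;> simp [hf, Set.indicator_apply, hy]⟩
    have hpull' := hpull f 1 hfmeas measurable_one
    have heq : R ((f ∘ σ) * 1) x = f x * R 1 x := by rw [hpull']; rfl
    rw [mul_one] at heq
    have hcomp : (f ∘ σ) = (σ ⁻¹' s).indicator (1 : X → ℝ) := by
      ext y
      by_cases hy : σ y ∈ s <;> simp [hf, Set.indicator_apply, hy, Function.comp]
    have hcmeas : Measurable (f ∘ σ) := hfmeas.comp hσ
    have hcbd : ∃ C : ℝ, ∀ y, |(f ∘ σ) y| ≤ C := ⟨1, fun y =>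
      hbd.elim (fun C hC => by
        by_cases hy : σ y ∈ s <;> simp [hf, Set.indicator_apply, hy, Function.comp])⟩
    have hint : R (f ∘ σ) x = ∫ y, (f ∘ σ) y ∂(μ x) := hRiesz _ hcmeas hcbd x
    rw [heq, hnorm] at hint
    have hintval : ∫ y, (f ∘ σ) y ∂(μ x) = (μ x (σ ⁻¹' s)).toReal := by
      have : ∫ y, (f ∘ σ) y ∂(μ x) = ∫ y, (σ ⁻¹' s).indicator (1 : X → ℝ) y ∂(μ x) := by
        rw [hcomp]
      rw [this, integral_indicator_one (hσ hs)]; rfl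
    rw [hintval] at hint
    rw [Measure.dirac_apply' x hs]
    by_cases hx : x ∈ s
    · have : f x = 1 := by simp [hf, Set.indicator_apply, hx]
      rw [this] at hint; simp only [Pi.one_apply, one_mul, zero_mul] at hint
      have : μ x (σ ⁻¹' s) = 1 := by
        rw [← ENNReal.toReal_eq_one_iff]
        exact hint.symm
      simp [this, hx]
    · have : f x = 0 := by simp [hf, Set.indicator_apply, hx]
      rw [this] at hint; simp only [Pi.one_apply, one_mul, zero_mul] at hint
      have hz : μ x (σ ⁻¹' s) = 0 := by
        have hne : μ x (σ ⁻¹' s) ≠ ⊤ := measure_ne_top _ _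
        have := ENNReal.toReal_eq_zero_iff (μ x (σ ⁻¹' s))
        rcases this.mp hint.symm with h | h
        · exact h
        · exact absurd h hne
      simp [hz, hx]
  ext s hs
  rw [Measure.map_apply hσ hs, key s hs]
end

section
/- Suppose R is normalized (R 1 = 1) and has the Riesz property with Riesz family (μ_x)_{x ∈ X}. Then for all measurable sets A, B ⊆ X and every x ∈ X one has μ_x(σ⁻¹(A) ∩ B) = 1_A(x) · μ_x(B), where 1_A is the indicator function of A (equivalently, μ_x(σ⁻¹(A) ∩ B) = δ_x(A) · μ_x(B) with δ_x the Dirac measure at x). -/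
open MeasureTheory
open scoped ENNReal

/-! Apply the pull-out property to `f = 1_A`, `g = 1_B`: since `(1_A ∘ σ) · 1_B = 1_{σ⁻¹(A) ∩ B}`,
it reads `R 1_{σ⁻¹(A) ∩ B} = 1_A · R 1_B`, and the Riesz property turns both sides, evaluated
at `x`, into `μ_x`-measures of the sets. -/

lemma indicator_one_comp_mul_indicator_one {α β M₀ : Type*} [MulZeroOneClass M₀] (σ : α → β)
    (A : Set β) (B : Set α) :
    (A.indicator (1 : β → M₀) ∘ σ) * B.indicator 1 = (σ ⁻¹' A ∩ B).indicator 1 := by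
  funext y
  rw [Pi.mul_apply, Function.comp_apply, ← Set.indicator_comp_right, ← Set.inter_indicator_mul]
  simp only [Function.comp_apply, Pi.one_apply, mul_one]
  rfl

lemma abs_indicator_one_le_one {α : Type*} (S : Set α) (y : α) :
    |S.indicator (1 : α → ℝ) y| ≤ 1 := by
  by_cases hy : y ∈ S <;> simp [hy]

section Riesz

variable {X : Type*} [MeasurableSpace X] {R : (X → ℝ) → X → ℝ} {μ : X → Measure X}

lemma apply_indicator_one_eq_measureReal
    (hRiesz : ∀ f : X → ℝ, Measurable f → (∃ C : ℝ, ∀ y, |f y| ≤ C) →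
      ∀ x, R f x = ∫ y, f y ∂(μ x))
    {S : Set X} (hS : MeasurableSet S) (x : X) : R (S.indicator 1) x = (μ x).real S := by
  rw [hRiesz _ (measurable_one.indicator hS) ⟨1, abs_indicator_one_le_one S⟩,
    integral_indicator_one hS]

lemma measureReal_preimage_inter_eq_indicator_mul {σ : X → X} (hσ : Measurable σ)
    (hpull : ∀ f g : X → ℝ, Measurable f → Measurable g → R ((f ∘ σ) * g) = f * R g)
    (hRiesz : ∀ f : X → ℝ, Measurable f → (∃ C : ℝ, ∀ y, |f y| ≤ C) →
      ∀ x, R f x = ∫ y, f y ∂(μ x))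
    {A B : Set X} (hA : MeasurableSet A) (hB : MeasurableSet B) (x : X) :
    (μ x).real (σ ⁻¹' A ∩ B) = A.indicator 1 x * (μ x).real B := by
  rw [← apply_indicator_one_eq_measureReal hRiesz ((hσ hA).inter hB),
    ← apply_indicator_one_eq_measureReal hRiesz hB, ← indicator_one_comp_mul_indicator_one,
    hpull _ _ (measurable_one.indicator hA) (measurable_one.indicator hB), Pi.mul_apply]

end Riesz

theorem stmt_16_general {X : Type*} [MeasurableSpace X] (σ : X → X)
    (hσ : Measurable σ)
    (R : (X → ℝ) → (X → ℝ))
    (hpull : ∀ f g : X → ℝ, Measurable f → Measurable g →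
      R ((f ∘ σ) * g) = f * R g)
    (μ : X → Measure X) (hfin : ∀ x, IsFiniteMeasure (μ x))
    (hRiesz : ∀ f : X → ℝ, Measurable f → (∃ C : ℝ, ∀ y, |f y| ≤ C) →
      ∀ x, R f x = ∫ y, f y ∂(μ x)) :
    ∀ A B : Set X, MeasurableSet A → MeasurableSet B → ∀ x : X,
      μ x (σ ⁻¹' A ∩ B) = A.indicator (fun _ => (1 : ℝ≥0∞)) x * μ x B := by
  intro A B hA hB x
  rw [← ofReal_measureReal, measureReal_preimage_inter_eq_indicator_mul hσ hpull hRiesz hA hB x,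
    ENNReal.ofReal_mul (Set.indicator_nonneg (f := (1 : X → ℝ)) (fun _ _ => zero_le_one) x),
    ofReal_measureReal]
  by_cases hx : x ∈ A <;> simp [hx]

/-- If a normalized transfer operator `R` has the Riesz property with Riesz
family `(μ_x)`, then `μ_x(σ⁻¹(A) ∩ B) = 1_A(x) · μ_x(B)` for all measurable
sets `A, B` and all `x`. -/
theorem stmt_16 {X : Type*} [MeasurableSpace X] (σ : X → X)
    (hσ : Measurable σ) (hσsurj : Function.Surjective σ)
    (R : (X → ℝ) → (X → ℝ))
    (hadd : ∀ f g : X → ℝ, R (f + g) = R f + R g)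
    (hsmul : ∀ (c : ℝ) (f : X → ℝ), R (c • f) = c • R f)
    (hmeas : ∀ f : X → ℝ, Measurable f → Measurable (R f))
    (hpos : ∀ f : X → ℝ, 0 ≤ f → 0 ≤ R f)
    (hpull : ∀ f g : X → ℝ, Measurable f → Measurable g →
      R ((f ∘ σ) * g) = f * R g)
    (hnorm : R 1 = 1)
    (μ : X → Measure X) (hfin : ∀ x, IsFiniteMeasure (μ x))
    (hRiesz : ∀ f : X → ℝ, Measurable f → (∃ C : ℝ, ∀ y, |f y| ≤ C) →
      ∀ x, R f x = ∫ y, f y ∂(μ x)) :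
    ∀ A B : Set X, MeasurableSet A → MeasurableSet B → ∀ x : X,
      μ x (σ ⁻¹' A ∩ B) = A.indicator (fun _ => (1 : ℝ≥0∞)) x * μ x B :=
  stmt_16_general σ hσ R hpull μ hfin hRiesz
end

section
/- Let X = (0,1) ⊂ ℝ with its Borel σ-algebra, let α : (0,1) → (0,1) be measurable, let (J_k)_{k ∈ ℕ} be pairwise disjoint measurable subsets of (0,1), and let β_k : (0,1) → (0,1) be measurable maps with β_k((0,1)) ⊆ J_k and α(β_k(x)) = x for all x ∈ (0,1) and all k. Let (p_k)_{k ∈ ℕ} be nonnegative reals with Σ_k p_k = 1, and let μ be a Borel probability measure on (0,1) satisfying the iterated function system identity μ = Σ_k p_k · (Measure.map β_k μ). Then for every k ∈ ℕ: (a) μ(J_k) = p_k, and (b) ∫_{J_k} α(x) dμ(x) = p_k · ∫_{(0,1)} x dμ(x); in particular, if ∫ x dμ(x) ≠ 0 then p_k = (∫_{J_k} α dμ) / (∫ x dμ). -/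
/-!
Since `β_l` maps into `J_l` and the `J_l` are disjoint, `β_l⁻¹(J_k)` is everything for `l = k` and
empty otherwise. Evaluating the IFS identity on `J_k` therefore sees only the `k`-th term, giving
`μ(J_k) = p_k`; integrating `1_{J_k} · α` against it likewise sees only `p_k · ∫ α ∘ β_k dμ`, and
`α ∘ β_k = id`.
-/

open MeasureTheory Function
open scoped ENNReal

section InverseBranches

variable {ι X Y : Type*} {J : ι → Set X} {β : ι → Y → X}

lemma preimage_eq_empty_of_forall_mem_of_pairwise_disjoint (hdisj : Pairwise (Disjoint on J))
    (hβJ : ∀ l y, β l y ∈ J l) {k l : ι} (hlk : l ≠ k) : β l ⁻¹' J k = ∅ :=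
  Set.eq_empty_of_forall_notMem fun y => (hdisj hlk).notMem_of_mem_left (hβJ l y)

variable [MeasurableSpace X] [MeasurableSpace Y]

lemma sum_smul_map_apply_of_forall_mem (hdisj : Pairwise (Disjoint on J))
    (hβJ : ∀ l y, β l y ∈ J l) (hβ : ∀ l, Measurable (β l)) (c : ι → ℝ≥0∞) (μ : Measure Y)
    {k : ι} (hJk : MeasurableSet (J k)) :
    Measure.sum (fun l => c l • μ.map (β l)) (J k) = c k * μ Set.univ := by
  rw [Measure.sum_apply _ hJk, tsum_eq_single k fun l hlk => ?_]
  · rw [Measure.smul_apply, Measure.map_apply (hβ k) hJk, smul_eq_mul,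
      show β k ⁻¹' J k = Set.univ from Set.eq_univ_of_forall (hβJ k)]
  · simp [Measure.map_apply (hβ l) hJk,
      preimage_eq_empty_of_forall_mem_of_pairwise_disjoint hdisj hβJ hlk]

lemma integral_indicator_sum_smul_map_of_forall_mem {E : Type*} [NormedAddCommGroup E]
    [NormedSpace ℝ E] (hdisj : Pairwise (Disjoint on J)) (hβJ : ∀ l y, β l y ∈ J l)
    (hβ : ∀ l, Measurable (β l)) (c : ι → ℝ≥0∞) (μ : Measure Y) {k : ι}
    (hJk : MeasurableSet (J k)) {g : X → E} (hg : StronglyMeasurable g)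
    (hint : Integrable ((J k).indicator g) (Measure.sum fun l => c l • μ.map (β l))) :
    ∫ x, (J k).indicator g x ∂(Measure.sum fun l => c l • μ.map (β l)) =
      (c k).toReal • ∫ y, g (β k y) ∂μ := by
  have hgJ (l : ι) : AEStronglyMeasurable ((J k).indicator g) (μ.map (β l)) :=
    (hg.indicator hJk).aestronglyMeasurable
  rw [integral_sum_measure hint, tsum_eq_single k fun l hlk => ?_]
  · rw [integral_smul_measure, integral_map (hβ k).aemeasurable (hgJ k)]
    simp only [Set.indicator_of_mem (hβJ k _)]
  · rw [integral_smul_measure, integral_map (hβ l).aemeasurable (hgJ l)]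
    simp [Set.indicator_of_notMem ((hdisj hlk).notMem_of_mem_left (hβJ l _))]

end InverseBranches

lemma integrable_coe_comp_Ioo_zero_one {X : Type*} [MeasurableSpace X] {μ : Measure X}
    [IsFiniteMeasure μ] {f : X → Set.Ioo (0 : ℝ) 1} (hf : Measurable f) :
    Integrable (fun x => (f x : ℝ)) μ :=
  .of_bound (measurable_subtype_coe.comp hf).aestronglyMeasurable 1 <| .of_forall fun x => by
    rw [Real.norm_eq_abs, abs_of_pos (f x).2.1]
    exact (f x).2.2.le

theorem stmt_18_general
    (α : Set.Ioo (0 : ℝ) 1 → Set.Ioo (0 : ℝ) 1) (hα : Measurable α)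
    (J : ℕ → Set (Set.Ioo (0 : ℝ) 1)) (hJ : ∀ k, MeasurableSet (J k))
    (hJdisj : ∀ k l, k ≠ l → Disjoint (J k) (J l))
    (β : ℕ → Set.Ioo (0 : ℝ) 1 → Set.Ioo (0 : ℝ) 1) (hβ : ∀ k, Measurable (β k))
    (hβJ : ∀ k x, β k x ∈ J k)
    (hαβ : ∀ k x, α (β k x) = x)
    (p : ℕ → ℝ) (hp : ∀ k, 0 ≤ p k)
    (μ : Measure (Set.Ioo (0 : ℝ) 1)) [IsProbabilityMeasure μ]
    (hIFS : μ = Measure.sum fun k => ENNReal.ofReal (p k) • Measure.map (β k) μ) :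
    ∀ k : ℕ,
      μ (J k) = ENNReal.ofReal (p k) ∧
      (∫ x in J k, ((α x : ℝ)) ∂μ = p k * ∫ x, (x : ℝ) ∂μ) ∧
      ((∫ x, (x : ℝ) ∂μ) ≠ 0 →
        p k = (∫ x in J k, ((α x : ℝ)) ∂μ) / ∫ x, (x : ℝ) ∂μ) := by
  intro k
  have hμJ := sum_smul_map_apply_of_forall_mem hJdisj hβJ hβ (fun l => ENNReal.ofReal (p l)) μ
    (hJ k)
  rw [← hIFS, measure_univ, mul_one] at hμJ
  have hint : Integrable ((J k).indicator fun x => (α x : ℝ)) μ :=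
    (integrable_coe_comp_Ioo_zero_one hα).indicator (hJ k)
  have hαJ := integral_indicator_sum_smul_map_of_forall_mem hJdisj hβJ hβ
    (fun l => ENNReal.ofReal (p l)) μ (hJ k)
    (g := fun x => (α x : ℝ)) (measurable_subtype_coe.comp hα).stronglyMeasurable
    (hIFS ▸ hint)
  rw [← hIFS, integral_indicator (hJ k), ENNReal.toReal_ofReal (hp k)] at hαJ
  simp only [hαβ, smul_eq_mul] at hαJ
  exact ⟨hμJ, hαJ, fun h => eq_div_of_mul_eq h hαJ.symm⟩

/-- For an IFS measure `μ = Σ_k p_k · μ ∘ β_k⁻¹` on `(0,1)`, with inverse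
branches `β_k` of `α` taking values in pairwise disjoint sets `J_k`:
`μ(J_k) = p_k` and `∫_{J_k} α dμ = p_k · ∫ x dμ`; in particular
`p_k = (∫_{J_k} α dμ) / (∫ x dμ)` whenever `∫ x dμ ≠ 0`. -/
theorem stmt_18
    (α : Set.Ioo (0 : ℝ) 1 → Set.Ioo (0 : ℝ) 1) (hα : Measurable α)
    (J : ℕ → Set (Set.Ioo (0 : ℝ) 1)) (hJ : ∀ k, MeasurableSet (J k))
    (hJdisj : ∀ k l, k ≠ l → Disjoint (J k) (J l))
    (β : ℕ → Set.Ioo (0 : ℝ) 1 → Set.Ioo (0 : ℝ) 1) (hβ : ∀ k, Measurable (β k))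
    (hβJ : ∀ k x, β k x ∈ J k)
    (hαβ : ∀ k x, α (β k x) = x)
    (p : ℕ → ℝ) (hp : ∀ k, 0 ≤ p k) (hpsum : ∑' k, p k = 1)
    (μ : Measure (Set.Ioo (0 : ℝ) 1)) [IsProbabilityMeasure μ]
    (hIFS : μ = Measure.sum fun k => ENNReal.ofReal (p k) • Measure.map (β k) μ) :
    ∀ k : ℕ,
      μ (J k) = ENNReal.ofReal (p k) ∧
      (∫ x in J k, ((α x : ℝ)) ∂μ = p k * ∫ x, (x : ℝ) ∂μ) ∧
      ((∫ x, (x : ℝ) ∂μ) ≠ 0 →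
        p k = (∫ x in J k, ((α x : ℝ)) ∂μ) / ∫ x, (x : ℝ) ∂μ) :=
  stmt_18_general α hα J hJ hJdisj β hβ hβJ hαβ p hp μ hIFS
end

section
/- (Wold decomposition.) Let H be a complex Hilbert space and S : H → H a linear isometry. Let N = (range S)ᗮ be the orthogonal complement of the range of S, and let H_∞ = ⋂_{n ∈ ℕ} range(Sⁿ) (the intersection of the ranges of all iterates of S, each of which is a closed subspace). Then: (1) the subspaces Sᵐ(N) and Sⁿ(N) are mutually orthogonal for all m ≠ n; (2) S maps H_∞ bijectively onto H_∞ (so the restriction of S to H_∞ is a unitary operator on H_∞); (3) H_∞ is the orthogonal complement of the closed subspace spanned by the family {Sⁿ(N) : n ∈ ℕ}, so that H decomposes as the orthogonal direct sum H = H_∞ ⊕ closure(⊕_{n ∈ ℕ} Sⁿ(N)), on the second summand of which S acts as a unilateral shift. -/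
/-!
Write `N = (range S)ᗮ`. Because `Sᵏ` preserves inner products, `Sᵏ (Nᗮ) = range Sᵏ ⊓ (Sᵏ N)ᗮ`,
and `Nᗮ = range S` as `range S` is closed; so `range Sᵏ⁺¹ = range Sᵏ ⊓ (Sᵏ N)ᗮ`. Thus for `m < n`,
`Sⁿ N ⊆ range Sᵐ⁺¹ ⊆ (Sᵐ N)ᗮ`, and unwinding the recursion, `⨅ n, range Sⁿ = ⨅ k, (Sᵏ N)ᗮ`.
Finally the injective map `S` commutes with the intersection and shifts `range Sⁿ` to `range Sⁿ⁺¹`.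
-/

open Submodule LinearMap

theorem LinearIsometry.toLinearMap_pow {R E : Type*} [Semiring R] [SeminormedAddCommGroup E]
    [Module R E] (S : E →ₗᵢ[R] E) (n : ℕ) : (S ^ n).toLinearMap = S.toLinearMap ^ n :=
  LinearMap.ext fun x => by rw [coe_toLinearMap, coe_pow, Module.End.pow_apply]; rfl

namespace Module.End

variable {R M : Type*} [Semiring R] [AddCommMonoid M] [Module R M] (f : Module.End R M)

theorem map_range_pow (n : ℕ) : (range (f ^ n)).map f = range (f ^ (n + 1)) := by
  rw [pow_succ', mul_eq_comp, range_comp]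

theorem map_pow_range (n : ℕ) : (range f).map (f ^ n) = range (f ^ (n + 1)) := by
  rw [pow_succ, mul_eq_comp, range_comp]

theorem range_pow_antitone : Antitone fun n : ℕ => range (f ^ n) :=
  (iterateRange f).monotone

variable {f} in
theorem map_iInf_range_pow (hf : Function.Injective f) :
    (⨅ n : ℕ, range (f ^ n)).map f = ⨅ n : ℕ, range (f ^ n) := by
  rw [map_iInf f hf, ← (range_pow_antitone f).iInf_nat_add 1]
  simp only [map_range_pow]

end Module.End

namespace LinearIsometry

variable {𝕜 E : Type*} [RCLike 𝕜] [NormedAddCommGroup E] [InnerProductSpace 𝕜 E]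
  (S : E →ₗᵢ[𝕜] E)

def wanderingSubspace : Submodule 𝕜 E := (range S.toLinearMap)ᗮ

theorem range_pow_succ_le_orthogonal_map_wanderingSubspace (k : ℕ) :
    range (S.toLinearMap ^ (k + 1)) ≤ (S.wanderingSubspace.map (S.toLinearMap ^ k))ᗮ := by
  rw [← Module.End.map_pow_range, ← toLinearMap_pow]
  calc (range S.toLinearMap).map (S ^ k).toLinearMap
      ≤ S.wanderingSubspaceᗮ.map (S ^ k).toLinearMap := map_mono (le_orthogonal_orthogonal _)
    _ ≤ (S.wanderingSubspace.map (S ^ k).toLinearMap)ᗮ := (map_orthogonal _ _).trans_le inf_le_left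

theorem isOrtho_map_pow_wanderingSubspace {m n : ℕ} (h : m ≠ n) :
    S.wanderingSubspace.map (S.toLinearMap ^ m) ⟂ S.wanderingSubspace.map (S.toLinearMap ^ n) := by
  wlog hmn : m < n generalizing m n
  · exact (this h.symm (h.lt_or_gt.resolve_left hmn)).symm
  refine (isOrtho_iff_le.mpr ?_).symm
  exact map_le_range.trans <| (Module.End.range_pow_antitone _ hmn).trans <|
    S.range_pow_succ_le_orthogonal_map_wanderingSubspace m

theorem isClosed_range [CompleteSpace E] : IsClosed (range S.toLinearMap : Set E) := by
  rw [coe_range]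
  exact S.isometry.isClosedEmbedding.isClosed_range

theorem range_pow_succ_eq_inf [CompleteSpace E] (k : ℕ) :
    range (S.toLinearMap ^ (k + 1)) =
      range (S.toLinearMap ^ k) ⊓ (S.wanderingSubspace.map (S.toLinearMap ^ k))ᗮ := by
  have := S.isClosed_range.completeSpace_coe
  have hN : S.wanderingSubspaceᗮ = range S.toLinearMap := orthogonal_orthogonal _
  rw [← Module.End.map_pow_range, ← hN, ← toLinearMap_pow, map_orthogonal, inf_comm,
    toLinearMap_pow]

theorem iInf_range_pow_eq_orthogonal_iSup [CompleteSpace E] :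
    ⨅ n : ℕ, range (S.toLinearMap ^ n) =
      (⨆ n : ℕ, S.wanderingSubspace.map (S.toLinearMap ^ n))ᗮ := by
  rw [← iInf_orthogonal]
  refine le_antisymm (le_iInf fun k => ?_) (le_iInf fun n => ?_)
  · exact (iInf_le _ (k + 1)).trans ((S.range_pow_succ_eq_inf k).le.trans inf_le_right)
  · induction n with
    | zero => simp [Module.End.one_eq_id]
    | succ n ih => rw [range_pow_succ_eq_inf]; exact le_inf ih (iInf_le _ n)

end LinearIsometry

/-- Wold decomposition for an isometry `S` of a complex Hilbert space `H`.
With `N = (range S)ᗮ` and `H_∞ = ⋂ₙ range Sⁿ`: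
(1) the subspaces `Sᵐ N` are mutually orthogonal;
(2) `S` maps `H_∞` onto itself (restricting to a unitary);
(3) `H_∞` is the orthogonal complement of the span of `{Sⁿ N : n ∈ ℕ}`. -/
theorem stmt_19 {H : Type*} [NormedAddCommGroup H] [InnerProductSpace ℂ H]
    [CompleteSpace H] (S : H →ₗᵢ[ℂ] H) :
    (∀ m n : ℕ, m ≠ n →
      Submodule.IsOrtho
        (Submodule.map (S.toLinearMap ^ m) (LinearMap.range S.toLinearMap)ᗮ)
        (Submodule.map (S.toLinearMap ^ n) (LinearMap.range S.toLinearMap)ᗮ)) ∧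
    (Submodule.map S.toLinearMap (⨅ n : ℕ, LinearMap.range (S.toLinearMap ^ n)) =
      ⨅ n : ℕ, LinearMap.range (S.toLinearMap ^ n)) ∧
    ((⨅ n : ℕ, LinearMap.range (S.toLinearMap ^ n)) =
      (⨆ n : ℕ, Submodule.map (S.toLinearMap ^ n)
        (LinearMap.range S.toLinearMap)ᗮ)ᗮ) :=
  ⟨fun _ _ => S.isOrtho_map_pow_wanderingSubspace, Module.End.map_iInf_range_pow S.injective,
    S.iInf_range_pow_eq_orthogonal_iSup⟩
end
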